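/- arXiv:2409.01845 — 6 statements merged into one kernel-verified Lean document; each statement's English description precedes it below -/
import Mathlib

section
/- If π is a uniformly random permutation of [n] independent of independent Bernoulli random variables X_{j,r} with success probabilities p_{j,r}, and S_n = Σ_{j=1}^n X_{j,π(j)}, then Var(S_n) = λ − Σ_{j=1}^n (p̄_{j,·})² − γ, where λ = ES_n = (1/n) Σ_{j,r} p_{j,r}, p̄_{j,·} = (1/n) Σ_r p_{j,r}, and γ = (1/(2n²(n-1))) Σ_{(j,k) distinct} Σ_{(r,s) distinct} (p_{j,r}-p_{j,s})(p_{k,r}-p_{k,s}). -/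
/-!
Conditionally on `π = σ`, independence of the Bernoulli entries gives
`E[S | σ] = ∑ j, p j (σ j)` and, since indicators are idempotent,
`E[S² | σ] = ∑ j, p j (σ j) + ∑_{j ≠ k} p j (σ j) * p k (σ k)`.
The symmetric group acts transitively on points and on ordered pairs of distinct points, so
`σ j` is uniform on `[n]` and, for `j ≠ k`, `(σ j, σ k)` is uniform on the `n (n - 1)` ordered
pairs of distinct points. Hence `E S = λ` and `E S² = λ + A / (n (n - 1))` with
`A = ∑_{j ≠ k, r ≠ s} p j r * p k s`. What remains is algebra: splitting `(∑ p)²` and the double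
sum defining `γ` along the diagonals `j = k` and `r = s` expresses both through `A` and
`B = ∑_{j ≠ k} ∑ r, p j r * p k r`.
-/

open Finset Real

/-- Probability weight of an outcome `x` of the Bernoulli matrix `(X_{j,r})` with
success probabilities `p`, the entries being independent. -/
noncomputable def bw (n : ℕ) (p : Fin n → Fin n → ℝ) (x : Fin n → Fin n → Bool) : ℝ :=
  ∏ j : Fin n, ∏ r : Fin n, if x j r then p j r else 1 - p j r

/-- Expectation of `f (X, π)` where the Bernoulli matrix `X` (independent entries with
success probabilities `p`) and the uniformly distributed random permutation `π` are
independent. -/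
noncomputable def dExp (n : ℕ) (p : Fin n → Fin n → ℝ)
    (f : (Fin n → Fin n → Bool) → Equiv.Perm (Fin n) → ℝ) : ℝ :=
  ((n.factorial : ℝ))⁻¹ *
    ∑ σ : Equiv.Perm (Fin n), ∑ x : Fin n → Fin n → Bool, bw n p x * f x σ

/-- The random diagonal sum `S_n = ∑ j, X_{j,π(j)}` as a function of the outcome. -/
noncomputable def dSum (n : ℕ) (x : Fin n → Fin n → Bool) (σ : Equiv.Perm (Fin n)) : ℝ :=
  ∑ j : Fin n, if x j (σ j) then (1:ℝ) else 0

/-- The variance of the random diagonal sum `S_n`. -/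
noncomputable def dVar (n : ℕ) (p : Fin n → Fin n → ℝ) : ℝ :=
  dExp n p (fun x σ => (dSum n x σ)^2) - (dExp n p (dSum n))^2

theorem Fintype.sum_sum_eq_sum_add_sum_ne {κ M : Type*} [Fintype κ] [DecidableEq κ]
    [AddCommMonoid M] (f : κ → κ → M) :
    ∑ r, ∑ s, f r s = ∑ r, f r r + ∑ r, ∑ s, if r ≠ s then f r s else 0 := by
  rw [← sum_add_distrib]
  refine Finset.sum_congr rfl fun r _ => ?_
  rw [← sum_filter, filter_ne, add_sum_erase _ _ (mem_univ r)]

namespace MulAction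

theorem card_nsmul_sum_comp_smul {G X M : Type*} [Group G] [Fintype G] [MulAction G X]
    [Fintype X] [IsPretransitive G X] [AddCommMonoid M] (f : X → M) (x : X) :
    Fintype.card X • ∑ g : G, f (g • x) = Fintype.card G • ∑ y, f y := by
  have orbit_const : ∀ y : X, ∑ g : G, f (g • y) = ∑ g : G, f (g • x) := by
    intro y
    obtain ⟨h, rfl⟩ := exists_smul_eq G x y
    exact Fintype.sum_equiv (Equiv.mulRight h) _ _ fun g => by simp [mul_smul]
  calc Fintype.card X • ∑ g : G, f (g • x) = ∑ y : X, ∑ g : G, f (g • y) := by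
        simp [orbit_const]
    _ = ∑ g : G, ∑ y : X, f (g • y) := Finset.sum_comm
    _ = ∑ _g : G, ∑ y, f y := Finset.sum_congr rfl fun g _ => Equiv.sum_comp (toPerm g) f
    _ = Fintype.card G • ∑ y, f y := by rw [sum_const, card_univ]

end MulAction

namespace Function.Embedding

theorem sum_finTwo {α M : Type*} [Fintype α] [DecidableEq α] [AddCommMonoid M]
    (g : α → α → M) :
    ∑ e : Fin 2 ↪ α, g (e 0) (e 1) = ∑ r, ∑ s, if r ≠ s then g r s else 0 := by
  rw [Fintype.sum_equiv twoEmbeddingEquiv (fun e => g (e 0) (e 1)) (fun x => g x.1.1 x.1.2)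
      (fun _ => rfl), ← Fintype.sum_prod_type', ← Finset.sum_filter]
  exact (Finset.sum_subtype _ (fun x => by simp) (fun x : α × α => g x.1 x.2)).symm

end Function.Embedding

namespace Equiv.Perm

variable {α K : Type*} [Fintype α] [DecidableEq α] [Field K] [CharZero K]

theorem inv_factorial_mul_sum_apply (a : α) (f : α → K) :
    ((Fintype.card α).factorial : K)⁻¹ * ∑ σ : Perm α, f (σ a)
      = (Fintype.card α : K)⁻¹ * ∑ r, f r := by
  have h := MulAction.card_nsmul_sum_comp_smul (G := Perm α) f a
  simp only [nsmul_eq_mul, Fintype.card_perm, Equiv.Perm.smul_def] at h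
  have : Nonempty α := ⟨a⟩
  have : (Fintype.card α : K) ≠ 0 := by simp
  have : ((Fintype.card α).factorial : K) ≠ 0 := by simp [Nat.factorial_ne_zero]
  field_simp
  linear_combination h

theorem inv_factorial_mul_sum_sum_apply (f : α → α → K) :
    ((Fintype.card α).factorial : K)⁻¹ * ∑ σ : Perm α, ∑ a, f a (σ a)
      = (Fintype.card α : K)⁻¹ * ∑ a, ∑ r, f a r := by
  rw [sum_comm, mul_sum, mul_sum]
  exact Finset.sum_congr rfl fun a _ => inv_factorial_mul_sum_apply a (f a)

theorem inv_factorial_mul_sum_apply_pair {a b : α} (hab : a ≠ b) (g : α → α → K) :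
    ((Fintype.card α).factorial : K)⁻¹ * ∑ σ : Perm α, g (σ a) (σ b)
      = ((Fintype.card α : K) * (Fintype.card α - 1))⁻¹ *
          ∑ r, ∑ s, if r ≠ s then g r s else 0 := by
  have := isMultiplyPretransitive α 2
  have h := MulAction.card_nsmul_sum_comp_smul (G := Perm α) (fun e : Fin 2 ↪ α => g (e 0) (e 1))
    (Function.Embedding.embFinTwo hab)
  simp only [nsmul_eq_mul, Fintype.card_perm, Fintype.card_embedding_eq, Fintype.card_fin,
    Nat.cast_descFactorial_two, Function.Embedding.smul_apply, Equiv.Perm.smul_def,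
    Function.Embedding.embFinTwo_apply_zero, Function.Embedding.embFinTwo_apply_one,
    Function.Embedding.sum_finTwo] at h
  have : Nonempty α := ⟨a⟩
  have : (Fintype.card α : K) ≠ 0 := by simp
  have : ((Fintype.card α).factorial : K) ≠ 0 := by simp [Nat.factorial_ne_zero]
  have : (Fintype.card α : K) - 1 ≠ 0 := by
    rw [sub_ne_zero, Ne, Nat.cast_eq_one]
    exact (Fintype.one_lt_card_iff.mpr ⟨a, b, hab⟩).ne'
  field_simp
  linear_combination h

end Equiv.Perm

section Algebra

variable {ι κ R : Type*} [Fintype ι] [Fintype κ] [DecidableEq ι] [DecidableEq κ] [CommRing R]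

theorem sum_sum_ite_and_ne (P : Prop) [Decidable P] (f : κ → κ → R) :
    ∑ r, ∑ s, (if P ∧ r ≠ s then f r s else 0)
      = if P then ∑ r, ∑ s, (if r ≠ s then f r s else 0) else 0 := by
  by_cases h : P <;> simp [h]

theorem sum_mul_sum_eq_sum_mul_add_sum_ne (u v : κ → R) :
    (∑ r, u r) * (∑ r, v r) = ∑ r, u r * v r + ∑ r, ∑ s, if r ≠ s then u r * v s else 0 := by
  rw [Fintype.sum_mul_sum, Fintype.sum_sum_eq_sum_add_sum_ne]

theorem sum_ne_sub_mul_sub (u v : κ → R) :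
    ∑ r, ∑ s, (if r ≠ s then (u r - u s) * (v r - v s) else 0)
      = 2 * ((Fintype.card κ - 1) * ∑ r, u r * v r
          - ∑ r, ∑ s, if r ≠ s then u r * v s else 0) := by
  have expand : ∑ r, ∑ s, (u r - u s) * (v r - v s)
      = 2 * (Fintype.card κ * ∑ r, u r * v r - (∑ r, u r) * (∑ r, v r)) := by
    simp only [sub_mul, mul_sub, sum_sub_distrib, sum_const, card_univ, nsmul_eq_mul,
      ← mul_sum, ← sum_mul]
    ring
  rw [Fintype.sum_sum_eq_sum_add_sum_ne] at expand
  simp only [sub_self, mul_zero, sum_const_zero, zero_add] at expand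
  rw [expand, sum_mul_sum_eq_sum_mul_add_sum_ne]
  ring

theorem sq_sum_sum_eq_sum_sq_add_sum_ne (p : ι → κ → R) :
    (∑ j, ∑ r, p j r) ^ 2 = ∑ j, (∑ r, p j r) ^ 2
      + ∑ j, ∑ k, (if j ≠ k then ∑ r, p j r * p k r else 0)
      + ∑ j, ∑ k, ∑ r, ∑ s, (if j ≠ k ∧ r ≠ s then p j r * p k s else 0) := by
  simp only [sum_sum_ite_and_ne]
  rw [sq, Fintype.sum_mul_sum, Fintype.sum_sum_eq_sum_add_sum_ne]
  simp only [← sq, sum_mul_sum_eq_sum_mul_add_sum_ne, ite_add_zero, sum_add_distrib]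
  ring

theorem sum_ne_ne_sub_mul_sub (p : ι → κ → R) :
    ∑ j, ∑ k, ∑ r, ∑ s, (if j ≠ k ∧ r ≠ s then (p j r - p j s) * (p k r - p k s) else 0)
      = 2 * ((Fintype.card κ - 1) * ∑ j, ∑ k, (if j ≠ k then ∑ r, p j r * p k r else 0)
          - ∑ j, ∑ k, ∑ r, ∑ s, (if j ≠ k ∧ r ≠ s then p j r * p k s else 0)) := by
  simp only [sum_sum_ite_and_ne, sum_ne_sub_mul_sub]
  have distrib : ∀ (P : Prop) [Decidable P] (a b c : R),
      (if P then 2 * (a * b - c) else 0) = 2 * (a * (if P then b else 0) - if P then c else 0) := by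
    intro P _ a b c
    split_ifs <;> ring
  simp only [distrib]
  simp only [mul_sub, mul_sum, sum_sub_distrib]

end Algebra

theorem Fintype.sum_prod_mul_prod_ite_of_add_eq_one {ι R : Type*} [Fintype ι] [DecidableEq ι]
    [CommRing R] (w : ι → Bool → R) (hw : ∀ i, w i true + w i false = 1) (S : Finset ι) :
    ∑ y : ι → Bool, (∏ i, w i (y i)) * ∏ i ∈ S, (if y i then 1 else 0) = ∏ i ∈ S, w i true := by
  have factor : ∀ y : ι → Bool, (∏ i, w i (y i)) * ∏ i ∈ S, (if y i then (1 : R) else 0)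
      = ∏ i, w i (y i) * (if i ∈ S then (if y i then 1 else 0) else 1) := by
    intro y
    rw [prod_mul_distrib, Fintype.prod_ite_mem]
  simp_rw [factor]
  rw [← Fintype.prod_sum (fun i b => w i b * (if i ∈ S then (if b then 1 else 0) else 1)),
    ← Fintype.prod_ite_mem S (fun i => w i true)]
  refine Finset.prod_congr rfl fun i _ => ?_
  by_cases h : i ∈ S <;> simp [h, hw i]

section Bernoulli

variable (n : ℕ) (p : Fin n → Fin n → ℝ)

theorem sum_bw_mul_prod_ite (S : Finset (Fin n × Fin n)) :
    ∑ x : Fin n → Fin n → Bool, bw n p x * ∏ q ∈ S, (if x q.1 q.2 then 1 else 0)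
      = ∏ q ∈ S, p q.1 q.2 := by
  have h := Fintype.sum_prod_mul_prod_ite_of_add_eq_one
    (fun q b => if b then p q.1 q.2 else 1 - p q.1 q.2) (fun _ => by simp) S
  simp only [if_true] at h
  rw [← h]
  refine Fintype.sum_equiv (Equiv.curry (Fin n) (Fin n) Bool).symm _ _ fun x => ?_
  rw [bw, Fintype.prod_prod_type]
  rfl

theorem sum_bw_mul_dSum (σ : Equiv.Perm (Fin n)) :
    ∑ x, bw n p x * dSum n x σ = ∑ j, p j (σ j) := by
  simp_rw [dSum, mul_sum]
  rw [sum_comm]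
  refine Finset.sum_congr rfl fun j _ => ?_
  simpa using sum_bw_mul_prod_ite n p {(j, σ j)}

theorem sum_bw_mul_dSum_sq (σ : Equiv.Perm (Fin n)) :
    ∑ x, bw n p x * dSum n x σ ^ 2
      = ∑ j, p j (σ j) + ∑ j, ∑ k, if j ≠ k then p j (σ j) * p k (σ k) else 0 := by
  have pair : ∀ j k, ∑ x, bw n p x * ((if x j (σ j) then 1 else 0) * (if x k (σ k) then 1 else 0))
      = if j = k then p j (σ j) else p j (σ j) * p k (σ k) := by
    intro j k
    split_ifs with h
    · subst h
      simpa [← ite_and] using sum_bw_mul_prod_ite n p {(j, σ j)}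
    · simpa [prod_pair (by simpa using h : (j, σ j) ≠ (k, σ k))]
        using sum_bw_mul_prod_ite n p {(j, σ j), (k, σ k)}
  simp_rw [dSum, sq, Fintype.sum_mul_sum, mul_sum]
  rw [sum_comm]
  calc _ = ∑ j, ∑ k, (if j = k then p j (σ j) else p j (σ j) * p k (σ k)) :=
        Finset.sum_congr rfl fun j _ => by
          rw [sum_comm]
          exact Finset.sum_congr rfl fun k _ => pair j k
    _ = _ := by
        rw [Fintype.sum_sum_eq_sum_add_sum_ne]
        simp +contextual

theorem dExp_dSum : dExp n p (dSum n) = (n : ℝ)⁻¹ * ∑ j, ∑ r, p j r := by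
  rw [dExp]
  simp only [sum_bw_mul_dSum]
  simpa using Equiv.Perm.inv_factorial_mul_sum_sum_apply p

theorem dExp_dSum_sq :
    dExp n p (fun x σ => dSum n x σ ^ 2)
      = (n : ℝ)⁻¹ * ∑ j, ∑ r, p j r + ((n : ℝ) * (n - 1))⁻¹ *
          ∑ j, ∑ k, ∑ r, ∑ s, (if j ≠ k ∧ r ≠ s then p j r * p k s else 0) := by
  have pair : ∀ j k : Fin n,
      (n.factorial : ℝ)⁻¹ * ∑ σ : Equiv.Perm (Fin n), (if j ≠ k then p j (σ j) * p k (σ k) else 0)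
        = ((n : ℝ) * (n - 1))⁻¹ * ∑ r, ∑ s, (if j ≠ k ∧ r ≠ s then p j r * p k s else 0) := by
    intro j k
    rw [sum_sum_ite_and_ne]
    split_ifs with hjk
    · simpa using Equiv.Perm.inv_factorial_mul_sum_apply_pair hjk (fun r s => p j r * p k s)
    · simp
  rw [dExp]
  simp only [sum_bw_mul_dSum_sq, sum_add_distrib, mul_add]
  congr 1
  · simpa using Equiv.Perm.inv_factorial_mul_sum_sum_apply p
  · rw [sum_comm, mul_sum, mul_sum]
    refine Finset.sum_congr rfl fun j _ => ?_
    rw [sum_comm, mul_sum, mul_sum]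
    exact Finset.sum_congr rfl fun k _ => pair j k

end Bernoulli

theorem var_diag_sum_general (n : ℕ) (hn : 2 ≤ n) (p : Fin n → Fin n → ℝ) :
    dExp n p (dSum n) = (n:ℝ)⁻¹ * ∑ j : Fin n, ∑ r : Fin n, p j r ∧
    dVar n p
      = (n:ℝ)⁻¹ * (∑ j : Fin n, ∑ r : Fin n, p j r)
        - ∑ j : Fin n, ((n:ℝ)⁻¹ * ∑ r : Fin n, p j r)^2
        - (1 / (2 * (n:ℝ)^2 * ((n:ℝ) - 1))) *
            ∑ j : Fin n, ∑ k : Fin n, ∑ r : Fin n, ∑ s : Fin n,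
              (if j ≠ k ∧ r ≠ s then (p j r - p j s) * (p k r - p k s) else 0) := by
  refine ⟨dExp_dSum n p, ?_⟩
  have hn1 : (n : ℝ) - 1 ≠ 0 := by
    rw [sub_ne_zero, Ne, Nat.cast_eq_one]
    omega
  rw [dVar, dExp_dSum_sq, dExp_dSum, sum_ne_ne_sub_mul_sub]
  have hT := sq_sum_sum_eq_sum_sq_add_sum_ne p
  simp only [Fintype.card_fin, mul_pow, ← mul_sum]
  field_simp
  linear_combination (1 - (n : ℝ)) * hT

theorem var_diag_sum (n : ℕ) (hn : 2 ≤ n) (p : Fin n → Fin n → ℝ)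
    (hp : ∀ j r, p j r ∈ Set.Icc (0:ℝ) 1) :
    dExp n p (dSum n) = (n:ℝ)⁻¹ * ∑ j : Fin n, ∑ r : Fin n, p j r ∧
    dVar n p
      = (n:ℝ)⁻¹ * (∑ j : Fin n, ∑ r : Fin n, p j r)
        - ∑ j : Fin n, ((n:ℝ)⁻¹ * ∑ r : Fin n, p j r)^2
        - (1 / (2 * (n:ℝ)^2 * ((n:ℝ) - 1))) *
            ∑ j : Fin n, ∑ k : Fin n, ∑ r : Fin n, ∑ s : Fin n,
              (if j ≠ k ∧ r ≠ s then (p j r - p j s) * (p k r - p k s) else 0) :=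
  var_diag_sum_general n hn p
end

section
/- For (j,k) in [n]² with j ≠ k, Cov(X_{j,π(j)}, X_{k,π(k)}) = (1/(n-1)) ( p̄_{j,·} p̄_{k,·} − (1/n) Σ_{r=1}^n p_{j,r} p_{k,r} ), where p̄_{j,·} = (1/n) Σ_r p_{j,r}. -/
open Finset Real

/-! Independence of the Bernoulli entries makes `∑ₓ bw p x · ∏_{(a,r) ∈ s} [x a r]` equal to
`∏_{(a,r) ∈ s} p a r`, so only averages over the permutation remain. Right multiplication by a
permutation taking `(j, k)` to `(a, b)` is a bijection of `Perm (Fin n)`, hence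
`∑_σ f (σ j) (σ k)` does not depend on the pair `j ≠ k`; averaging it over all `n (n - 1)` such
pairs and then summing over `σ` first shows `n (n - 1) ∑_σ f (σ j) (σ k) = n! ∑_{r ≠ s} f r s`.
The single-entry average `n ∑_σ g (σ j) = n! ∑_r g r` is the same argument with swaps. -/

lemma sum_prod_bernoulli_mul_prod_indicator {ι : Type*} [Fintype ι] [DecidableEq ι]
    (q : ι → ℝ) (s : Finset ι) :
    ∑ x : ι → Bool, (∏ i, if x i then q i else 1 - q i) * ∏ i ∈ s, (if x i then 1 else 0)
      = ∏ i ∈ s, q i := by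
  rw [← Fintype.prod_ite_mem s q]
  simp_rw [← Fintype.prod_ite_mem s (fun i => if _ then (1 : ℝ) else 0), ← prod_mul_distrib]
  rw [← Fintype.prod_sum (fun i (t : Bool) =>
    (if t then q i else 1 - q i) * if i ∈ s then (if t then 1 else 0) else 1)]
  refine prod_congr rfl fun i _ => ?_
  split_ifs <;> simp

lemma sum_bw_mul_prod_indicator {n : ℕ} (p : Fin n → Fin n → ℝ) (s : Finset (Fin n × Fin n)) :
    ∑ x : Fin n → Fin n → Bool, bw n p x * ∏ i ∈ s, (if x i.1 i.2 then 1 else 0)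
      = ∏ i ∈ s, p i.1 i.2 := by
  rw [← sum_prod_bernoulli_mul_prod_indicator (fun i => p i.1 i.2) s,
    ← (Equiv.curry (Fin n) (Fin n) Bool).sum_comp]
  refine sum_congr rfl fun x _ => ?_
  rw [bw, ← Fintype.prod_prod_type']
  rfl

lemma exists_perm_apply_pair {α : Type*} [DecidableEq α] {a b c d : α} (hab : a ≠ b)
    (hcd : c ≠ d) : ∃ τ : Equiv.Perm α, τ a = c ∧ τ b = d := by
  refine ⟨Equiv.swap (Equiv.swap a c b) d * Equiv.swap a c, ?_, ?_⟩
  · have hb : Equiv.swap a c b ≠ Equiv.swap a c a := (Equiv.swap a c).injective.ne hab.symm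
    rw [Equiv.swap_apply_left] at hb
    simp only [Equiv.Perm.mul_apply, Equiv.swap_apply_left]
    exact Equiv.swap_apply_of_ne_of_ne hb.symm hcd
  · simp only [Equiv.Perm.mul_apply, Equiv.swap_apply_left]

section Perm

variable {α : Type*} [Fintype α] [DecidableEq α]

lemma sum_perm_apply_eq (f : α → ℝ) (a b : α) :
    ∑ σ : Equiv.Perm α, f (σ a) = ∑ σ : Equiv.Perm α, f (σ b) := by
  rw [← Equiv.sum_comp (Equiv.mulRight (Equiv.swap a b))]
  simp

lemma sum_perm_apply_pair_eq (f : α → α → ℝ) {a b c d : α} (hab : a ≠ b) (hcd : c ≠ d) :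
    ∑ σ : Equiv.Perm α, f (σ a) (σ b) = ∑ σ : Equiv.Perm α, f (σ c) (σ d) := by
  obtain ⟨τ, hτa, hτb⟩ := exists_perm_apply_pair hab hcd
  rw [← Equiv.sum_comp (Equiv.mulRight τ)]
  simp [hτa, hτb]

lemma sum_sum_perm_apply (g : α → ℝ) :
    ∑ c, ∑ σ : Equiv.Perm α, g (σ c) = (Fintype.card α).factorial * ∑ r, g r := by
  rw [sum_comm]
  simp [Equiv.sum_comp, Fintype.card_perm]

lemma card_mul_sum_perm_apply (g : α → ℝ) (a : α) :
    Fintype.card α * ∑ σ : Equiv.Perm α, g (σ a) = (Fintype.card α).factorial * ∑ r, g r := by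
  rw [← sum_sum_perm_apply, sum_congr rfl fun c _ => sum_perm_apply_eq g c a]
  simp

lemma card_mul_card_sub_one_mul_sum_perm_apply_pair (f : α → α → ℝ) {a b : α} (hab : a ≠ b) :
    Fintype.card α * (Fintype.card α - 1) * ∑ σ : Equiv.Perm α, f (σ a) (σ b)
      = (Fintype.card α).factorial * (∑ r, ∑ s, f r s - ∑ r, f r r) := by
  have hrow : ∀ c, ∑ d, ∑ σ : Equiv.Perm α, f (σ c) (σ d)
      = ∑ σ : Equiv.Perm α, f (σ c) (σ c)
        + (Fintype.card α - 1) * ∑ σ : Equiv.Perm α, f (σ a) (σ b) := by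
    intro c
    rw [← add_sum_erase _ _ (mem_univ c),
      sum_congr rfl fun d hd => sum_perm_apply_pair_eq f (mem_erase.1 hd).1.symm hab,
      sum_const, card_erase_of_mem (mem_univ c), nsmul_eq_mul, card_univ,
      Nat.cast_pred (Fintype.card_pos_iff.2 ⟨c⟩)]
  have hall : ∑ c, ∑ d, ∑ σ : Equiv.Perm α, f (σ c) (σ d)
      = (Fintype.card α).factorial * ∑ r, ∑ s, f r s := by
    rw [← sum_sum_perm_apply]
    refine sum_congr rfl fun c _ => ?_
    rw [sum_comm]
    exact sum_congr rfl fun σ _ => Equiv.sum_comp σ (f (σ c))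
  have hdiag := sum_sum_perm_apply fun r => f r r
  simp only [hrow, sum_add_distrib, sum_const, card_univ, nsmul_eq_mul] at hall
  linear_combination hall - hdiag

end Perm

section DiagonalEntries

variable {n : ℕ}

lemma natCast_sub_one_ne_zero_of_ne {j k : Fin n} (hjk : j ≠ k) : (n : ℝ) - 1 ≠ 0 := by
  have : (2 : ℝ) ≤ n := by exact_mod_cast Fin.nontrivial_iff_two_le.1 ⟨⟨j, k, hjk⟩⟩
  linarith

variable (p : Fin n → Fin n → ℝ)

lemma dExp_indicator (a : Fin n) :
    dExp n p (fun x σ => if x a (σ a) then 1 else 0) = (n : ℝ)⁻¹ * ∑ r, p a r := by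
  have hX : ∀ σ : Equiv.Perm (Fin n),
      ∑ x, bw n p x * (if x a (σ a) then 1 else 0) = p a (σ a) := fun σ => by
    simpa using sum_bw_mul_prod_indicator p {(a, σ a)}
  have hπ := card_mul_sum_perm_apply (p a) a
  rw [Fintype.card_fin] at hπ
  have hn : (n : ℝ) ≠ 0 := Nat.cast_ne_zero.2 a.pos.ne'
  rw [dExp, sum_congr rfl fun σ _ => hX σ]
  field_simp
  linear_combination hπ

lemma dExp_indicator_mul_indicator {j k : Fin n} (hjk : j ≠ k) :
    dExp n p (fun x σ => (if x j (σ j) then 1 else 0) * (if x k (σ k) then 1 else 0))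
      = ((n : ℝ) * (n - 1))⁻¹ * ((∑ r, p j r) * (∑ r, p k r) - ∑ r, p j r * p k r) := by
  have hX : ∀ σ : Equiv.Perm (Fin n), ∑ x, bw n p x *
      ((if x j (σ j) then 1 else 0) * (if x k (σ k) then 1 else 0)) = p j (σ j) * p k (σ k) :=
    fun σ => by
      have hne : (j, σ j) ≠ (k, σ k) := fun h => hjk (Prod.ext_iff.1 h).1
      simpa [prod_pair hne] using sum_bw_mul_prod_indicator p {(j, σ j), (k, σ k)}
  have hπ := card_mul_card_sub_one_mul_sum_perm_apply_pair (fun r s => p j r * p k s) hjk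
  rw [Fintype.card_fin, ← sum_mul_sum] at hπ
  have hn0 : (n : ℝ) ≠ 0 := Nat.cast_ne_zero.2 j.pos.ne'
  have hn1 := natCast_sub_one_ne_zero_of_ne hjk
  rw [dExp, sum_congr rfl fun σ _ => hX σ]
  field_simp
  linear_combination hπ

end DiagonalEntries

theorem cov_diag_entries_general (n : ℕ) (p : Fin n → Fin n → ℝ)
    (j k : Fin n) (hjk : j ≠ k) :
    dExp n p (fun x σ =>
        (if x j (σ j) then (1:ℝ) else 0) * (if x k (σ k) then (1:ℝ) else 0))
      - dExp n p (fun x σ => if x j (σ j) then (1:ℝ) else 0) *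
        dExp n p (fun x σ => if x k (σ k) then (1:ℝ) else 0)
    = (1 / ((n:ℝ) - 1)) *
        (((n:ℝ)⁻¹ * ∑ r : Fin n, p j r) * ((n:ℝ)⁻¹ * ∑ r : Fin n, p k r)
          - (n:ℝ)⁻¹ * ∑ r : Fin n, p j r * p k r) := by
  rw [dExp_indicator_mul_indicator p hjk, dExp_indicator, dExp_indicator]
  have hn0 : (n : ℝ) ≠ 0 := Nat.cast_ne_zero.2 j.pos.ne'
  have hn1 := natCast_sub_one_ne_zero_of_ne hjk
  field_simp
  ring

theorem cov_diag_entries (n : ℕ) (hn : 2 ≤ n) (p : Fin n → Fin n → ℝ)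
    (hp : ∀ j r, p j r ∈ Set.Icc (0:ℝ) 1) (j k : Fin n) (hjk : j ≠ k) :
    dExp n p (fun x σ =>
        (if x j (σ j) then (1:ℝ) else 0) * (if x k (σ k) then (1:ℝ) else 0))
      - dExp n p (fun x σ => if x j (σ j) then (1:ℝ) else 0) *
        dExp n p (fun x σ => if x k (σ k) then (1:ℝ) else 0)
    = (1 / ((n:ℝ) - 1)) *
        (((n:ℝ)⁻¹ * ∑ r : Fin n, p j r) * ((n:ℝ)⁻¹ * ∑ r : Fin n, p k r)
          - (n:ℝ)⁻¹ * ∑ r : Fin n, p j r * p k r) :=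
  cov_diag_entries_general n p j k hjk
end

section
/- Under the setup of the random diagonal sum, λ(1 − m) ≤ Var(S_n) ≤ λ, where m = (n/(n-1)) max_{(j,r)} ( p̄_{j,·} + p̄_{·,r} − p_{j,r}/n − λ/n ), and moreover m ≤ min{λ, 2n/(n-1)}. -/
open Finset Real

namespace VarDiagAux

variable {n : ℕ}


variable {n : ℕ}

noncomputable def W (p : Fin n → Fin n → ℝ) (i : Fin n × Fin n) (b : Bool) : ℝ :=
  if b then p i.1 i.2 else 1 - p i.1 i.2

lemma sum_W_prod (p : Fin n → Fin n → ℝ) (s : Finset (Fin n × Fin n)) :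
    ∑ y : Fin n × Fin n → Bool,
        (∏ i, W p i (y i)) * (∏ i ∈ s, (if y i then (1:ℝ) else 0))
      = ∏ i ∈ s, p i.1 i.2 := by
  have h1 : ∀ y : Fin n × Fin n → Bool,
      (∏ i, W p i (y i)) * (∏ i ∈ s, (if y i then (1:ℝ) else 0))
        = ∏ i, (W p i (y i) * (if i ∈ s then (if y i then (1:ℝ) else 0) else 1)) := by
    intro y
    rw [Finset.prod_mul_distrib]
    congr 1
    rw [Finset.prod_ite_mem, Finset.univ_inter]
  simp_rw [h1]
  rw [← Fintype.prod_sum (fun (i : Fin n × Fin n) (b : Bool) => W p i b * if i ∈ s then (if b = true then (1:ℝ) else 0) else 1)]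
  have h2 : ∀ i : Fin n × Fin n,
      (∑ b : Bool, W p i b * (if i ∈ s then (if b = true then (1:ℝ) else 0) else 1))
        = if i ∈ s then p i.1 i.2 else 1 := by
    intro i
    by_cases h : i ∈ s <;> simp [h, W] <;> ring
  rw [Finset.prod_congr rfl (fun i _ => h2 i), Finset.prod_ite_mem, Finset.univ_inter]



lemma perm_sum_single (j : Fin n) (g : Fin n → ℝ) :
    (n : ℝ) * ∑ σ : Equiv.Perm (Fin n), g (σ j) = (n.factorial : ℝ) * ∑ r, g r := by
  have h1 : ∀ k : Fin n, ∑ σ : Equiv.Perm (Fin n), g (σ k)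
      = ∑ σ : Equiv.Perm (Fin n), g (σ j) := by
    intro k
    have := Equiv.sum_comp (Equiv.mulRight (Equiv.swap j k))
      (fun σ : Equiv.Perm (Fin n) => g (σ j))
    simpa [Equiv.Perm.mul_apply] using this
  have h2 : (n:ℝ) * ∑ σ : Equiv.Perm (Fin n), g (σ j)
      = ∑ k : Fin n, ∑ σ : Equiv.Perm (Fin n), g (σ k) := by
    rw [Finset.sum_congr rfl (fun k _ => h1 k), Finset.sum_const, nsmul_eq_mul,
      Finset.card_univ, Fintype.card_fin]
  rw [h2, Finset.sum_comm]
  have h3 : ∀ σ : Equiv.Perm (Fin n), ∑ k, g (σ k) = ∑ r, g r :=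
    fun σ => Equiv.sum_comp σ g
  rw [Finset.sum_congr rfl (fun σ _ => h3 σ), Finset.sum_const, nsmul_eq_mul,
    Finset.card_univ, Fintype.card_perm, Fintype.card_fin]

lemma exists_perm_two {j k a b : Fin n} (hjk : j ≠ k) (hab : a ≠ b) :
    ∃ τ : Equiv.Perm (Fin n), τ j = a ∧ τ k = b := by
  refine ⟨Equiv.swap (Equiv.swap j a k) b * Equiv.swap j a, ?_, ?_⟩
  · have hca : Equiv.swap j a k ≠ a := by
      intro h
      have h2 := congrArg (Equiv.swap j a) h
      rw [Equiv.swap_apply_self, Equiv.swap_apply_right] at h2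
      exact hjk h2.symm
    rw [Equiv.Perm.mul_apply, Equiv.swap_apply_left,
      Equiv.swap_apply_of_ne_of_ne (Ne.symm hca) hab]
  · rw [Equiv.Perm.mul_apply, Equiv.swap_apply_left]

lemma perm_sum_pair {j k : Fin n} (hjk : j ≠ k) (F : Fin n → Fin n → ℝ) :
    (((univ : Finset (Fin n)).offDiag.card : ℝ)) * ∑ σ : Equiv.Perm (Fin n), F (σ j) (σ k)
      = (n.factorial : ℝ) * ∑ ab ∈ (univ : Finset (Fin n)).offDiag, F ab.1 ab.2 := by
  have h1 : ∀ ab ∈ (univ : Finset (Fin n)).offDiag,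
      ∑ σ : Equiv.Perm (Fin n), F (σ ab.1) (σ ab.2)
        = ∑ σ : Equiv.Perm (Fin n), F (σ j) (σ k) := by
    intro ab hab
    rw [Finset.mem_offDiag] at hab
    obtain ⟨τ, hτj, hτk⟩ := exists_perm_two hjk hab.2.2
    have := Equiv.sum_comp (Equiv.mulRight τ)
      (fun σ : Equiv.Perm (Fin n) => F (σ j) (σ k))
    simpa [Equiv.Perm.mul_apply, hτj, hτk] using this
  have h2 : (((univ : Finset (Fin n)).offDiag.card : ℝ))
        * ∑ σ : Equiv.Perm (Fin n), F (σ j) (σ k)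
      = ∑ ab ∈ (univ : Finset (Fin n)).offDiag,
          ∑ σ : Equiv.Perm (Fin n), F (σ ab.1) (σ ab.2) := by
    rw [Finset.sum_congr rfl h1, Finset.sum_const, nsmul_eq_mul]
  rw [h2, Finset.sum_comm]
  have h3 : ∀ σ : Equiv.Perm (Fin n),
      ∑ ab ∈ (univ : Finset (Fin n)).offDiag, F (σ ab.1) (σ ab.2)
        = ∑ ab ∈ (univ : Finset (Fin n)).offDiag, F ab.1 ab.2 := by
    intro σ
    apply Finset.sum_equiv (Equiv.prodCongr σ σ)
    · intro ab
      simp [Finset.mem_offDiag, EmbeddingLike.apply_eq_iff_eq]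
    · intro ab _
      rfl
  rw [Finset.sum_congr rfl (fun σ _ => h3 σ), Finset.sum_const, nsmul_eq_mul,
    Finset.card_univ, Fintype.card_perm, Fintype.card_fin]

lemma sum_bw_mul (p : Fin n → Fin n → ℝ) (f : (Fin n → Fin n → Bool) → ℝ) :
    ∑ x : Fin n → Fin n → Bool, bw n p x * f x
      = ∑ y : Fin n × Fin n → Bool,
          (∏ i, W p i (y i)) * f (fun j r => y (j, r)) := by
  rw [← Equiv.sum_comp (Equiv.curry (Fin n) (Fin n) Bool)
    (fun x : Fin n → Fin n → Bool => bw n p x * f x)]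
  apply Finset.sum_congr rfl
  intro y _
  have hb : bw n p (Equiv.curry (Fin n) (Fin n) Bool y) = ∏ i, W p i (y i) := by
    rw [Fintype.prod_prod_type (fun i : Fin n × Fin n => W p i (y i))]
    rfl
  rw [show (Equiv.curry (Fin n) (Fin n) Bool) y = (fun j r => y (j, r)) from rfl, ← hb]
  rfl

lemma sum_bw_dSum (p : Fin n → Fin n → ℝ) (σ : Equiv.Perm (Fin n)) :
    ∑ x : Fin n → Fin n → Bool, bw n p x * dSum n x σ = ∑ j, p j (σ j) := by
  rw [sum_bw_mul]
  have h1 : ∀ y : Fin n × Fin n → Bool,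
      (∏ i, W p i (y i)) * dSum n (fun j r => y (j, r)) σ
        = ∑ j, (∏ i, W p i (y i)) * (if y (j, σ j) then (1:ℝ) else 0) := by
    intro y
    rw [dSum, Finset.mul_sum]
  simp_rw [h1]
  rw [Finset.sum_comm]
  apply Finset.sum_congr rfl
  intro j _
  have := sum_W_prod p {(j, σ j)}
  simpa using this

lemma sum_bw_dSum_sq (p : Fin n → Fin n → ℝ) (σ : Equiv.Perm (Fin n)) :
    ∑ x : Fin n → Fin n → Bool, bw n p x * (dSum n x σ)^2
      = ∑ j, ∑ k, (if j = k then p j (σ j) else p j (σ j) * p k (σ k)) := by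
  rw [sum_bw_mul]
  have h1 : ∀ y : Fin n × Fin n → Bool,
      (∏ i, W p i (y i)) * (dSum n (fun j r => y (j, r)) σ)^2
        = ∑ j, ∑ k, (∏ i, W p i (y i)) *
            ((if y (j, σ j) then (1:ℝ) else 0) * (if y (k, σ k) then (1:ℝ) else 0)) := by
    intro y
    rw [dSum, sq, Finset.sum_mul_sum]
    rw [Finset.mul_sum]
    apply Finset.sum_congr rfl
    intro j _
    rw [Finset.mul_sum]
  simp_rw [h1]
  rw [Finset.sum_comm]
  apply Finset.sum_congr rfl
  intro j _
  rw [Finset.sum_comm]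
  apply Finset.sum_congr rfl
  intro k _
  by_cases hjk : j = k
  · subst hjk
    simp only [if_pos rfl]
    have h2 : ∀ y : Fin n × Fin n → Bool,
        (if y (j, σ j) then (1:ℝ) else 0) * (if y (j, σ j) then (1:ℝ) else 0)
          = if y (j, σ j) then (1:ℝ) else 0 := by
      intro y; by_cases h : y (j, σ j) <;> simp [h]
    simp_rw [h2]
    have := sum_W_prod p {(j, σ j)}
    simpa using this
  · rw [if_neg hjk]
    have hne : (j, σ j) ≠ (k, σ k) := by
      intro h; exact hjk (congrArg Prod.fst h)
    have := sum_W_prod p {(j, σ j), (k, σ k)}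
    simp only [Finset.prod_pair hne] at this
    simpa using this

lemma offDiag_card_real (hn : 1 ≤ n) :
    (((univ : Finset (Fin n)).offDiag.card : ℝ)) = (n:ℝ) * ((n:ℝ) - 1) := by
  rw [Finset.offDiag_card, Finset.card_univ, Fintype.card_fin]
  have h : n ≤ n * n := Nat.le_mul_of_pos_left n (by omega)
  push_cast [Nat.cast_sub h]
  ring

lemma dExp_dSum_eq (hn : 1 ≤ n) (p : Fin n → Fin n → ℝ) :
    dExp n p (dSum n) = (n:ℝ)⁻¹ * ∑ j, ∑ r, p j r := by
  have hfac : (n.factorial : ℝ) ≠ 0 := Nat.cast_ne_zero.2 (Nat.factorial_ne_zero n)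
  have hnne : (n:ℝ) ≠ 0 := Nat.cast_ne_zero.2 (by omega)
  rw [dExp, Finset.sum_congr rfl (fun σ _ => sum_bw_dSum p σ), Finset.sum_comm]
  have h2 : ∀ j : Fin n, ∑ σ : Equiv.Perm (Fin n), p j (σ j)
      = (n.factorial : ℝ) * (n:ℝ)⁻¹ * ∑ r, p j r := by
    intro j
    have h := perm_sum_single j (p j)
    field_simp
    linarith [h]
  rw [Finset.sum_congr rfl (fun j _ => h2 j), ← Finset.mul_sum, ← mul_assoc, ← mul_assoc]
  field_simp

lemma sum_split (f : Fin n → Fin n → ℝ) :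
    ∑ j, ∑ k, f j k
      = (∑ j, f j j) + ∑ ab ∈ (univ : Finset (Fin n)).offDiag, f ab.1 ab.2 := by
  rw [← Finset.sum_product']
  rw [← Finset.diag_union_offDiag (univ : Finset (Fin n)),
    Finset.sum_union (Finset.disjoint_diag_offDiag _)]
  congr 1
  have hdiag : (univ : Finset (Fin n)).diag = Finset.image (fun a => (a, a)) univ := by
    ext ab
    simp only [Finset.mem_diag, Finset.mem_image, Finset.mem_univ, true_and]
    constructor
    · intro h
      exact ⟨ab.1, Prod.ext rfl h⟩
    · rintro ⟨a, rfl⟩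
      exact rfl
  rw [hdiag, Finset.sum_image (fun a _ b _ h => congrArg Prod.fst h)]

lemma dExp_dSum_sq_eq (hn : 2 ≤ n) (p : Fin n → Fin n → ℝ) :
    dExp n p (fun x σ => (dSum n x σ)^2)
      = (n:ℝ)⁻¹ * (∑ j, ∑ r, p j r)
        + ((n:ℝ) * ((n:ℝ) - 1))⁻¹ *
            ∑ jk ∈ (univ : Finset (Fin n)).offDiag,
              ∑ rs ∈ (univ : Finset (Fin n)).offDiag, p jk.1 rs.1 * p jk.2 rs.2 := by
  have hfac : (n.factorial : ℝ) ≠ 0 := Nat.cast_ne_zero.2 (Nat.factorial_ne_zero n)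
  have hnne : (n:ℝ) ≠ 0 := Nat.cast_ne_zero.2 (by omega)
  have hn2 : (2:ℝ) ≤ (n:ℝ) := by exact_mod_cast hn
  have hn1 : ((n:ℝ) - 1) ≠ 0 := by intro h; linarith
  rw [dExp, Finset.sum_congr rfl (fun σ _ => sum_bw_dSum_sq p σ)]
  have hsplit : ∀ σ : Equiv.Perm (Fin n),
      (∑ j, ∑ k, (if j = k then p j (σ j) else p j (σ j) * p k (σ k)))
        = (∑ j, p j (σ j))
          + ∑ ab ∈ (univ : Finset (Fin n)).offDiag, p ab.1 (σ ab.1) * p ab.2 (σ ab.2) := by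
    intro σ
    rw [sum_split]
    congr 1
    · exact Finset.sum_congr rfl (fun j _ => by rw [if_pos rfl])
    · apply Finset.sum_congr rfl
      intro ab hab
      rw [Finset.mem_offDiag] at hab
      rw [if_neg hab.2.2]
  rw [Finset.sum_congr rfl (fun σ _ => hsplit σ), Finset.sum_add_distrib]
  have hA : ∑ σ : Equiv.Perm (Fin n), ∑ j, p j (σ j)
      = (n.factorial : ℝ) * ((n:ℝ)⁻¹ * ∑ j, ∑ r, p j r) := by
    rw [Finset.sum_comm]
    have h2 : ∀ j : Fin n, ∑ σ : Equiv.Perm (Fin n), p j (σ j)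
        = (n.factorial : ℝ) * ((n:ℝ)⁻¹ * ∑ r, p j r) := by
      intro j
      have h := perm_sum_single j (p j)
      field_simp
      linarith [h]
    rw [Finset.sum_congr rfl (fun j _ => h2 j), ← Finset.mul_sum, ← Finset.mul_sum]
  have hB : ∑ σ : Equiv.Perm (Fin n),
        ∑ ab ∈ (univ : Finset (Fin n)).offDiag, p ab.1 (σ ab.1) * p ab.2 (σ ab.2)
      = (n.factorial : ℝ) * (((n:ℝ) * ((n:ℝ) - 1))⁻¹ *
          ∑ jk ∈ (univ : Finset (Fin n)).offDiag,
            ∑ rs ∈ (univ : Finset (Fin n)).offDiag, p jk.1 rs.1 * p jk.2 rs.2) := by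
    rw [Finset.sum_comm]
    have h2 : ∀ jk ∈ (univ : Finset (Fin n)).offDiag,
        ∑ σ : Equiv.Perm (Fin n), p jk.1 (σ jk.1) * p jk.2 (σ jk.2)
          = (n.factorial : ℝ) * (((n:ℝ) * ((n:ℝ) - 1))⁻¹ *
              ∑ rs ∈ (univ : Finset (Fin n)).offDiag, p jk.1 rs.1 * p jk.2 rs.2) := by
      intro jk hjk
      rw [Finset.mem_offDiag] at hjk
      have h := perm_sum_pair hjk.2.2 (fun a b => p jk.1 a * p jk.2 b)
      rw [offDiag_card_real (by omega)] at h
      have hmul : (n:ℝ) * ((n:ℝ) - 1) ≠ 0 := mul_ne_zero hnne hn1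
      field_simp at h ⊢
      linarith [h]
    rw [Finset.sum_congr rfl h2, ← Finset.mul_sum, ← Finset.mul_sum]
  rw [hA, hB, ← mul_add, ← mul_assoc, inv_mul_cancel₀ hfac, one_mul]

lemma offDiag_sum_eq (f : Fin n → Fin n → ℝ) :
    ∑ ab ∈ (univ : Finset (Fin n)).offDiag, f ab.1 ab.2
      = (∑ j, ∑ k, f j k) - ∑ j, f j j := by
  have := sum_split f; linarith

lemma sq_of_sum_sum (g : Fin n → Fin n → ℝ) :
    ∑ j, ∑ k, (∑ r, g j r * g k r) = ∑ r, (∑ j, g j r)^2 := by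
  have e : ∀ j : Fin n, ∑ k, ∑ r, g j r * g k r = ∑ r, ∑ k, g j r * g k r :=
    fun j => Finset.sum_comm
  rw [Finset.sum_congr rfl (fun j _ => e j), Finset.sum_comm]
  apply Finset.sum_congr rfl
  intro r _
  rw [sq, Finset.sum_mul_sum]

lemma D_eq (p : Fin n → Fin n → ℝ) :
    ∑ jk ∈ (univ : Finset (Fin n)).offDiag, ∑ rs ∈ (univ : Finset (Fin n)).offDiag,
        p jk.1 rs.1 * p jk.2 rs.2
      = (∑ j, ∑ r, p j r)^2 - (∑ j, (∑ r, p j r)^2) - (∑ r, (∑ j, p j r)^2)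
        + ∑ j, ∑ r, (p j r)^2 := by
  have hinner : ∀ jk : Fin n × Fin n,
      ∑ rs ∈ (univ : Finset (Fin n)).offDiag, p jk.1 rs.1 * p jk.2 rs.2
        = (∑ r, p jk.1 r) * (∑ r, p jk.2 r) - ∑ r, p jk.1 r * p jk.2 r := by
    intro jk
    rw [offDiag_sum_eq (fun r s => p jk.1 r * p jk.2 s), Finset.sum_mul_sum]
  rw [Finset.sum_congr rfl (fun jk _ => hinner jk),
    offDiag_sum_eq (fun j k => (∑ r, p j r) * (∑ r, p k r) - ∑ r, p j r * p k r)]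
  have h1 : ∑ j, ∑ k, ((∑ r, p j r) * (∑ r, p k r) - ∑ r, p j r * p k r)
      = (∑ j, ∑ r, p j r)^2 - ∑ r, (∑ j, p j r)^2 := by
    rw [Finset.sum_congr rfl
        (fun j (_ : j ∈ (univ : Finset (Fin n))) => Finset.sum_sub_distrib
          (f := fun k => (∑ r, p j r) * (∑ r, p k r)) (g := fun k => ∑ r, p j r * p k r)),
      Finset.sum_sub_distrib]
    congr 1
    · rw [sq, Finset.sum_mul_sum]
    · exact sq_of_sum_sum p
  have h2 : ∑ j, ((∑ r, p j r) * (∑ r, p j r) - ∑ r, p j r * p j r)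
      = (∑ j, (∑ r, p j r)^2) - ∑ j, ∑ r, (p j r)^2 := by
    rw [Finset.sum_sub_distrib]
    congr 1
    · exact Finset.sum_congr rfl (fun j _ => (sq _).symm)
    · exact Finset.sum_congr rfl (fun j _ =>
        Finset.sum_congr rfl (fun r _ => (sq _).symm))
  rw [h1, h2]
  ring

lemma key_id (hn : 2 ≤ n) (p : Fin n → Fin n → ℝ) :
    ∑ j : Fin n, ∑ r : Fin n, (p j r / n) *
        (((n:ℝ) / ((n:ℝ) - 1)) *
          ((n:ℝ)⁻¹ * ∑ r' : Fin n, p j r' + (n:ℝ)⁻¹ * ∑ j' : Fin n, p j' r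
            - p j r / n - ((n:ℝ)⁻¹ * ∑ j' : Fin n, ∑ r' : Fin n, p j' r') / n))
      = ((n:ℝ)⁻¹ * ∑ j, ∑ r, p j r)^2
        - ((n:ℝ) * ((n:ℝ)-1))⁻¹ * ∑ jk ∈ (univ : Finset (Fin n)).offDiag,
            ∑ rs ∈ (univ : Finset (Fin n)).offDiag, p jk.1 rs.1 * p jk.2 rs.2 := by
  have hn2 : (2:ℝ) ≤ (n:ℝ) := by exact_mod_cast hn
  have hnne : (n:ℝ) ≠ 0 := by intro h; linarith
  have h1ne : ((n:ℝ) - 1) ≠ 0 := by intro h; linarith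
  have expand : ∀ j r : Fin n, (p j r / n) *
        (((n:ℝ) / ((n:ℝ) - 1)) *
          ((n:ℝ)⁻¹ * ∑ r' : Fin n, p j r' + (n:ℝ)⁻¹ * ∑ j' : Fin n, p j' r
            - p j r / n - ((n:ℝ)⁻¹ * ∑ j' : Fin n, ∑ r' : Fin n, p j' r') / n))
      = ((n:ℝ) / ((n:ℝ) - 1) * (n:ℝ)⁻¹ * (n:ℝ)⁻¹) *
          (p j r * (∑ r' : Fin n, p j r'))
        + ((n:ℝ) / ((n:ℝ) - 1) * (n:ℝ)⁻¹ * (n:ℝ)⁻¹) *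
          (p j r * (∑ j' : Fin n, p j' r))
        - ((n:ℝ) / ((n:ℝ) - 1) * (n:ℝ)⁻¹ * (n:ℝ)⁻¹) * (p j r * p j r)
        - ((n:ℝ) / ((n:ℝ) - 1) * (n:ℝ)⁻¹ * (n:ℝ)⁻¹ * (n:ℝ)⁻¹) *
          (p j r * ∑ j' : Fin n, ∑ r' : Fin n, p j' r') := by
    intro j r
    ring
  simp_rw [expand]
  simp only [Finset.sum_sub_distrib, Finset.sum_add_distrib, ← Finset.mul_sum]
  have e1 : ∑ j : Fin n, ∑ r : Fin n, p j r * (∑ r' : Fin n, p j r')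
      = ∑ j, (∑ r, p j r)^2 := by
    apply Finset.sum_congr rfl
    intro j _
    rw [← Finset.sum_mul, sq]
  have e2 : ∑ j : Fin n, ∑ r : Fin n, p j r * (∑ j' : Fin n, p j' r)
      = ∑ r, (∑ j, p j r)^2 := by
    rw [Finset.sum_comm]
    apply Finset.sum_congr rfl
    intro r _
    rw [← Finset.sum_mul, sq]
  have e3 : ∑ j : Fin n, ∑ r : Fin n, p j r * (∑ j' : Fin n, ∑ r' : Fin n, p j' r')
      = (∑ j, ∑ r, p j r)^2 := by
    have h : ∀ j : Fin n, ∑ r : Fin n, p j r * (∑ j' : Fin n, ∑ r' : Fin n, p j' r')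
        = (∑ r, p j r) * (∑ j' : Fin n, ∑ r' : Fin n, p j' r') :=
      fun j => (Finset.sum_mul _ _ _).symm
    rw [Finset.sum_congr rfl (fun j _ => h j), ← Finset.sum_mul, sq]
  have e4 : ∑ j : Fin n, ∑ r : Fin n, p j r * p j r
      = ∑ j, ∑ r, (p j r)^2 := by
    exact Finset.sum_congr rfl (fun j _ => Finset.sum_congr rfl (fun r _ => (sq _).symm))
  rw [e1, e2, e3, e4, D_eq p]
  field_simp
  ring


lemma dVar_eq (hn : 2 ≤ n) (p : Fin n → Fin n → ℝ) :
    dVar n p = (n:ℝ)⁻¹ * (∑ j, ∑ r, p j r)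
      + ((n:ℝ) * ((n:ℝ) - 1))⁻¹ *
          ∑ jk ∈ (univ : Finset (Fin n)).offDiag,
            ∑ rs ∈ (univ : Finset (Fin n)).offDiag, p jk.1 rs.1 * p jk.2 rs.2
      - ((n:ℝ)⁻¹ * (∑ j, ∑ r, p j r))^2 := by
  rw [dVar, dExp_dSum_eq (by omega) p, dExp_dSum_sq_eq hn p]

lemma row_col_le (p : Fin n → Fin n → ℝ) (hp : ∀ j r, 0 ≤ p j r) (j r : Fin n) :
    (∑ r', p j r') + (∑ j', p j' r) - p j r ≤ ∑ j', ∑ r', p j' r' := by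
  have h1 : ∑ j' ∈ (univ : Finset (Fin n)).erase j, ∑ r', p j' r'
      = (∑ j', ∑ r', p j' r') - (∑ r', p j r') :=
    Finset.sum_erase_eq_sub (Finset.mem_univ j)
  have h2 : ∑ j' ∈ (univ : Finset (Fin n)).erase j, p j' r
      = (∑ j', p j' r) - p j r :=
    Finset.sum_erase_eq_sub (Finset.mem_univ j)
  have h3 : ∑ j' ∈ (univ : Finset (Fin n)).erase j, p j' r
      ≤ ∑ j' ∈ (univ : Finset (Fin n)).erase j, ∑ r', p j' r' :=
    Finset.sum_le_sum (fun i _ =>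
      Finset.single_le_sum (fun r' _ => hp i r') (Finset.mem_univ r))
  linarith

lemma sum_sq_le_sq_sum (f : Fin n → ℝ) (hf : ∀ i, 0 ≤ f i) :
    ∑ i, (f i)^2 ≤ (∑ i, f i)^2 := by
  have h : ∀ i ∈ (univ : Finset (Fin n)), (f i)^2 ≤ f i * ∑ k, f k := by
    intro i _
    rw [sq]
    exact mul_le_mul_of_nonneg_left
      (Finset.single_le_sum (fun k _ => hf k) (Finset.mem_univ i)) (hf i)
  calc ∑ i, (f i)^2 ≤ ∑ i, f i * ∑ k, f k := Finset.sum_le_sum h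
    _ = (∑ i, f i)^2 := by rw [← Finset.sum_mul, sq]

end VarDiagAux

theorem var_diag_sum_bounds (n : ℕ) (hn : 2 ≤ n) (p : Fin n → Fin n → ℝ)
    (hp : ∀ j r, p j r ∈ Set.Icc (0:ℝ) 1) (m : ℝ)
    (hm : IsGreatest (Set.range fun jr : Fin n × Fin n =>
        ((n:ℝ) / ((n:ℝ) - 1)) *
          ((n:ℝ)⁻¹ * ∑ r : Fin n, p jr.1 r + (n:ℝ)⁻¹ * ∑ j : Fin n, p j jr.2
            - p jr.1 jr.2 / n
            - ((n:ℝ)⁻¹ * ∑ j : Fin n, ∑ r : Fin n, p j r) / n)) m) :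
    ((n:ℝ)⁻¹ * ∑ j : Fin n, ∑ r : Fin n, p j r) * (1 - m) ≤ dVar n p ∧
    dVar n p ≤ (n:ℝ)⁻¹ * ∑ j : Fin n, ∑ r : Fin n, p j r ∧
    m ≤ min ((n:ℝ)⁻¹ * ∑ j : Fin n, ∑ r : Fin n, p j r) (2 * (n:ℝ) / ((n:ℝ) - 1)) := by
  classical
  have hn2 : (2:ℝ) ≤ (n:ℝ) := by exact_mod_cast hn
  have hnpos : (0:ℝ) < n := by linarith
  have h1pos : (0:ℝ) < (n:ℝ) - 1 := by linarith
  have hnn1pos : (0:ℝ) < (n:ℝ) * ((n:ℝ) - 1) := mul_pos hnpos h1pos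
  have hp0 : ∀ j r, 0 ≤ p j r := fun j r => (hp j r).1
  have hp1 : ∀ j r, p j r ≤ 1 := fun j r => (hp j r).2
  have hVar := VarDiagAux.dVar_eq hn p
  set T : ℝ := ∑ j, ∑ r, p j r with hTdef
  set D : ℝ := ∑ jk ∈ (univ : Finset (Fin n)).offDiag,
      ∑ rs ∈ (univ : Finset (Fin n)).offDiag, p jk.1 rs.1 * p jk.2 rs.2 with hDdef
  have hTnn : 0 ≤ T := Finset.sum_nonneg (fun j _ => Finset.sum_nonneg (fun r _ => hp0 j r))
  have hub : ∀ jr : Fin n × Fin n,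
      ((n:ℝ) / ((n:ℝ) - 1)) *
          ((n:ℝ)⁻¹ * ∑ r : Fin n, p jr.1 r + (n:ℝ)⁻¹ * ∑ j : Fin n, p j jr.2
            - p jr.1 jr.2 / n - ((n:ℝ)⁻¹ * T) / n) ≤ m :=
    fun jr => hm.2 ⟨jr, rfl⟩
  -- Chebyshev / positivity facts
  have hcheb : T^2 ≤ (n:ℝ) * ∑ j, (∑ r, p j r)^2 := by
    have := sq_sum_le_card_mul_sum_sq
      (s := (univ : Finset (Fin n))) (f := fun j => ∑ r, p j r)
    simpa [Finset.card_univ] using this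
  have hCQ : ∑ j, ∑ r, (p j r)^2 ≤ ∑ r, (∑ j, p j r)^2 := by
    rw [Finset.sum_comm]
    exact Finset.sum_le_sum (fun r _ =>
      VarDiagAux.sum_sq_le_sq_sum (fun j => p j r) (fun j => hp0 j r))
  have hD_le : D ≤ ((n:ℝ) * ((n:ℝ) - 1)) * ((n:ℝ)⁻¹ * T)^2 := by
    rw [hDdef, VarDiagAux.D_eq p, ← hTdef]
    have hexp : ((n:ℝ) * ((n:ℝ) - 1)) * ((n:ℝ)⁻¹ * T)^2 = T^2 - (n:ℝ)⁻¹ * T^2 := by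
      field_simp
    rw [hexp]
    have h4 : (n:ℝ)⁻¹ * T^2 ≤ ∑ j, (∑ r, p j r)^2 := by
      rw [inv_mul_le_iff₀ hnpos]
      linarith [hcheb]
    linarith [hCQ, h4]
  have hkey := VarDiagAux.key_id hn p
  rw [← hTdef, ← hDdef] at hkey
  -- lower bound
  have hsum_le : ∑ j : Fin n, ∑ r : Fin n, (p j r / n) *
        (((n:ℝ) / ((n:ℝ) - 1)) *
          ((n:ℝ)⁻¹ * ∑ r' : Fin n, p j r' + (n:ℝ)⁻¹ * ∑ j' : Fin n, p j' r
            - p j r / n - ((n:ℝ)⁻¹ * T) / n))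
      ≤ ∑ j : Fin n, ∑ r : Fin n, (p j r / n) * m := by
    apply Finset.sum_le_sum
    intro j _
    apply Finset.sum_le_sum
    intro r _
    exact mul_le_mul_of_nonneg_left (hub (j, r)) (div_nonneg (hp0 j r) hnpos.le)
  have hsum_m : ∑ j : Fin n, ∑ r : Fin n, (p j r / n) * m = ((n:ℝ)⁻¹ * T) * m := by
    have hpt : ∀ j r : Fin n, (p j r / n) * m = p j r * ((n:ℝ)⁻¹ * m) := by
      intro j r; ring
    simp_rw [hpt, ← Finset.sum_mul]
    rw [← hTdef]
    ring
  have hlow : ((n:ℝ)⁻¹ * T)^2 - ((n:ℝ) * ((n:ℝ) - 1))⁻¹ * D ≤ ((n:ℝ)⁻¹ * T) * m := by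
    rw [← hkey, ← hsum_m]
    exact hsum_le
  refine ⟨?_, ?_, ?_⟩
  · have h : ((n:ℝ)⁻¹ * T) * (1 - m)
        = (n:ℝ)⁻¹ * T - ((n:ℝ)⁻¹ * T) * m := by ring
    rw [h, hVar]
    linarith [hlow]
  · rw [hVar]
    have h : ((n:ℝ) * ((n:ℝ) - 1))⁻¹ * D ≤ ((n:ℝ)⁻¹ * T)^2 := by
      rw [inv_mul_le_iff₀ hnn1pos]
      calc D ≤ ((n:ℝ) * ((n:ℝ) - 1)) * ((n:ℝ)⁻¹ * T)^2 := hD_le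
        _ = (n:ℝ) * ((n:ℝ) - 1) * ((n:ℝ)⁻¹ * T)^2 := by ring
    linarith [h]
  · obtain ⟨jr0, hjr0⟩ := hm.1
    have hnne : (n:ℝ) ≠ 0 := ne_of_gt hnpos
    have h1ne : ((n:ℝ) - 1) ≠ 0 := ne_of_gt h1pos
    set u : ℝ := (∑ r, p jr0.1 r) + (∑ j, p j jr0.2) - p jr0.1 jr0.2 - (n:ℝ)⁻¹ * T with hu
    have hFu : m = u / ((n:ℝ) - 1) := by
      rw [← hjr0, hu]
      field_simp
    have hRC : (∑ r, p jr0.1 r) + (∑ j, p j jr0.2) - p jr0.1 jr0.2 ≤ T :=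
      VarDiagAux.row_col_le p hp0 jr0.1 jr0.2
    have hR : (∑ r, p jr0.1 r) ≤ (n:ℝ) := by
      calc (∑ r, p jr0.1 r) ≤ ∑ _r : Fin n, (1:ℝ) :=
            Finset.sum_le_sum (fun r _ => hp1 jr0.1 r)
        _ = (n:ℝ) := by simp
    have hC : (∑ j, p j jr0.2) ≤ (n:ℝ) := by
      calc (∑ j, p j jr0.2) ≤ ∑ _j : Fin n, (1:ℝ) :=
            Finset.sum_le_sum (fun j _ => hp1 j jr0.2)
        _ = (n:ℝ) := by simp
    apply le_min
    · rw [hFu, div_le_iff₀ h1pos]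
      have h : (n:ℝ)⁻¹ * T * ((n:ℝ) - 1) = T - (n:ℝ)⁻¹ * T := by
        field_simp
      rw [h]
      have hTn : 0 ≤ (n:ℝ)⁻¹ * T := by positivity
      linarith [hRC]
    · rw [hFu]
      have hu2 : u ≤ 2 * (n:ℝ) := by
        have hTn : 0 ≤ (n:ℝ)⁻¹ * T := by positivity
        have := hp0 jr0.1 jr0.2
        rw [hu]
        linarith [hR, hC]
      rw [div_le_div_iff₀ h1pos h1pos]
      nlinarith [hu2, h1pos]
end

section
/- γ' ≤ Var(S_n) − (1/n) Σ_{(j,r) ∈ [n]²} p_{j,r}(1 − p_{j,r}), where γ' = (2/(n²(n-1))) Σ_{(j,k) distinct} Σ_{(r,s) distinct} (p_{j,r}-p_{j,s})_+ (p_{k,s}-p_{k,r})_+ and S_n is the random diagonal sum. -/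
open Finset Real

/-! ### Auxiliary lemmas -/


lemma sumG {n : ℕ} (g : Fin n → Fin n → Bool → ℝ) :
    ∑ x : Fin n → Fin n → Bool, ∏ j, ∏ r, g j r (x j r)
      = ∏ j, ∏ r, (g j r true + g j r false) := by
  calc ∑ x : Fin n → Fin n → Bool, ∏ j, ∏ r, g j r (x j r)
      = ∏ j, ∑ y : Fin n → Bool, ∏ r, g j r (y r) :=
        (Fintype.prod_sum (fun j (y : Fin n → Bool) => ∏ r, g j r (y r))).symm
    _ = ∏ j, ∏ r, (g j r true + g j r false) := by
        refine Finset.prod_congr rfl fun j _ => ?_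
        rw [← Fintype.prod_sum (fun r (b : Bool) => g j r b)]
        simp

lemma prodIte {n : ℕ} (j r : Fin n) (c : Fin n → Fin n → ℝ) :
    ∏ j' : Fin n, ∏ r' : Fin n, (if j' = j ∧ r' = r then c j' r' else 1) = c j r := by
  rw [Finset.prod_eq_single j]
  · rw [Finset.prod_eq_single r]
    · simp
    · intro b _ hb; simp [hb]
    · simp
  · intro b _ hb
    refine Finset.prod_eq_one fun r' _ => by simp [hb]
  · simp

lemma E1 {n : ℕ} (p : Fin n → Fin n → ℝ) (j r : Fin n) :
    ∑ x : Fin n → Fin n → Bool, bw n p x * (if x j r then (1:ℝ) else 0) = p j r := by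
  have key : ∀ x : Fin n → Fin n → Bool,
      bw n p x * (if x j r then (1:ℝ) else 0)
        = ∏ j' : Fin n, ∏ r' : Fin n, ((if x j' r' then p j' r' else 1 - p j' r') *
            (if j' = j ∧ r' = r then (if x j' r' then (1:ℝ) else 0) else 1)) := by
    intro x
    simp only [Finset.prod_mul_distrib]
    rw [prodIte j r (fun j' r' => if x j' r' then (1:ℝ) else 0)]
    rfl
  simp_rw [key]
  rw [sumG (fun j' r' b => (if b then p j' r' else 1 - p j' r') *
      (if j' = j ∧ r' = r then (if b then (1:ℝ) else 0) else 1))]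
  beta_reduce
  have h2 : ∀ j' r' : Fin n,
      ((if (true:Bool) then p j' r' else 1 - p j' r') *
        (if j' = j ∧ r' = r then (if (true:Bool) then (1:ℝ) else 0) else 1)
      + (if (false:Bool) then p j' r' else 1 - p j' r') *
        (if j' = j ∧ r' = r then (if (false:Bool) then (1:ℝ) else 0) else 1))
      = if j' = j ∧ r' = r then p j' r' else 1 := by
    intro j' r'
    by_cases h : j' = j ∧ r' = r
    · simp [h]
    · simp [h] <;> ring
  calc ∏ j' : Fin n, ∏ r' : Fin n,
      ((if (true:Bool) then p j' r' else 1 - p j' r') *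
        (if j' = j ∧ r' = r then (if (true:Bool) then (1:ℝ) else 0) else 1)
      + (if (false:Bool) then p j' r' else 1 - p j' r') *
        (if j' = j ∧ r' = r then (if (false:Bool) then (1:ℝ) else 0) else 1))
      = ∏ j' : Fin n, ∏ r' : Fin n, (if j' = j ∧ r' = r then p j' r' else 1) := by
        exact Finset.prod_congr rfl fun j' _ => Finset.prod_congr rfl fun r' _ => h2 j' r'
    _ = p j r := prodIte j r p

lemma E2 {n : ℕ} (p : Fin n → Fin n → ℝ) {j k : Fin n} (hjk : j ≠ k) (r s : Fin n) :
    ∑ x : Fin n → Fin n → Bool, bw n p x * (if x j r then (1:ℝ) else 0)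
      * (if x k s then (1:ℝ) else 0) = p j r * p k s := by
  have key : ∀ x : Fin n → Fin n → Bool,
      bw n p x * (if x j r then (1:ℝ) else 0) * (if x k s then (1:ℝ) else 0)
        = ∏ j' : Fin n, ∏ r' : Fin n, ((if x j' r' then p j' r' else 1 - p j' r') *
            (if j' = j ∧ r' = r then (if x j' r' then (1:ℝ) else 0) else 1) *
            (if j' = k ∧ r' = s then (if x j' r' then (1:ℝ) else 0) else 1)) := by
    intro x
    simp only [Finset.prod_mul_distrib]
    rw [prodIte j r (fun j' r' => if x j' r' then (1:ℝ) else 0),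
        prodIte k s (fun j' r' => if x j' r' then (1:ℝ) else 0)]
    rfl
  simp_rw [key]
  rw [sumG (fun j' r' b => (if b then p j' r' else 1 - p j' r') *
      (if j' = j ∧ r' = r then (if b then (1:ℝ) else 0) else 1) *
      (if j' = k ∧ r' = s then (if b then (1:ℝ) else 0) else 1))]
  beta_reduce
  have h2 : ∀ j' r' : Fin n,
      ((if (true:Bool) then p j' r' else 1 - p j' r') *
        (if j' = j ∧ r' = r then (if (true:Bool) then (1:ℝ) else 0) else 1) *
        (if j' = k ∧ r' = s then (if (true:Bool) then (1:ℝ) else 0) else 1)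
      + (if (false:Bool) then p j' r' else 1 - p j' r') *
        (if j' = j ∧ r' = r then (if (false:Bool) then (1:ℝ) else 0) else 1) *
        (if j' = k ∧ r' = s then (if (false:Bool) then (1:ℝ) else 0) else 1))
      = (if j' = j ∧ r' = r then p j' r' else 1) * (if j' = k ∧ r' = s then p j' r' else 1) := by
    intro j' r'
    by_cases h1 : j' = j ∧ r' = r
    · by_cases h2 : j' = k ∧ r' = s
      · exact absurd (h1.1 ▸ h2.1) hjk
      · simp [h1, h2, hjk]
    · by_cases h2 : j' = k ∧ r' = s <;> simp [h1, h2, hjk, Ne.symm hjk] <;> ring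
  calc ∏ j' : Fin n, ∏ r' : Fin n,
      ((if (true:Bool) then p j' r' else 1 - p j' r') *
        (if j' = j ∧ r' = r then (if (true:Bool) then (1:ℝ) else 0) else 1) *
        (if j' = k ∧ r' = s then (if (true:Bool) then (1:ℝ) else 0) else 1)
      + (if (false:Bool) then p j' r' else 1 - p j' r') *
        (if j' = j ∧ r' = r then (if (false:Bool) then (1:ℝ) else 0) else 1) *
        (if j' = k ∧ r' = s then (if (false:Bool) then (1:ℝ) else 0) else 1))
      = ∏ j' : Fin n, ∏ r' : Fin n, ((if j' = j ∧ r' = r then p j' r' else 1) *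
          (if j' = k ∧ r' = s then p j' r' else 1)) := by
        exact Finset.prod_congr rfl fun j' _ => Finset.prod_congr rfl fun r' _ => h2 j' r'
    _ = p j r * p k s := by
        simp only [Finset.prod_mul_distrib]
        rw [prodIte j r p, prodIte k s p]


lemma P0 {N : ℕ} (f : Fin (N+1) → ℝ) :
    ∑ σ : Equiv.Perm (Fin (N+1)), f (σ 0) = (N.factorial : ℝ) * ∑ r, f r := by
  rw [← Equiv.sum_comp (Equiv.Perm.decomposeFin.symm) (fun σ => f (σ 0))]
  simp [Fintype.sum_prod_type, Finset.sum_const, Fintype.card_perm, mul_comm, Finset.mul_sum]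

lemma P1 {N : ℕ} (j : Fin (N+1)) (f : Fin (N+1) → ℝ) :
    ∑ σ : Equiv.Perm (Fin (N+1)), f (σ j) = (N.factorial : ℝ) * ∑ r, f r := by
  rw [← Equiv.sum_comp (Equiv.mulRight (Equiv.swap 0 j)) (fun σ => f (σ j)), ← P0 f]
  refine Finset.sum_congr rfl fun σ _ => ?_
  simp [Equiv.Perm.mul_apply]

lemma P2a {N : ℕ} {k : Fin (N+2)} (hk : k ≠ 0) (f : Fin (N+2) → Fin (N+2) → ℝ) :
    ∑ σ : Equiv.Perm (Fin (N+2)), f (σ 0) (σ k) =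
      (N.factorial : ℝ) * ∑ q, ∑ s, if s ≠ q then f q s else 0 := by
  obtain ⟨i, rfl⟩ : ∃ i : Fin (N+1), k = i.succ := ⟨k.pred hk, by simp⟩
  rw [← Equiv.sum_comp (Equiv.Perm.decomposeFin.symm) (fun σ => f (σ 0) (σ i.succ))]
  rw [Fintype.sum_prod_type]
  have step1 : ∀ q : Fin (N+2),
      (∑ e : Equiv.Perm (Fin (N+1)),
        f (Equiv.Perm.decomposeFin.symm (q, e) 0) (Equiv.Perm.decomposeFin.symm (q, e) i.succ))
      = (N.factorial : ℝ) * ∑ t : Fin (N+1), f q (Equiv.swap 0 q t.succ) := by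
    intro q
    simp only [Equiv.Perm.decomposeFin_symm_apply_zero, Equiv.Perm.decomposeFin_symm_apply_succ]
    exact P1 i (fun t => f q (Equiv.swap 0 q t.succ))
  simp_rw [step1]
  rw [← Finset.mul_sum]
  congr 1
  refine Finset.sum_congr rfl fun q _ => ?_
  have h1 : ∑ u : Fin (N+2), f q (Equiv.swap 0 q u)
      = f q (Equiv.swap 0 q 0) + ∑ t : Fin (N+1), f q (Equiv.swap 0 q t.succ) :=
    Fin.sum_univ_succ (fun u => f q (Equiv.swap 0 q u))
  have h2 : ∑ u : Fin (N+2), f q (Equiv.swap 0 q u) = ∑ u, f q u :=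
    Equiv.sum_comp (Equiv.swap 0 q) (fun u => f q u)
  have h3 : ∑ s : Fin (N+2), (if s ≠ q then f q s else 0) = (∑ u, f q u) - f q q := by
    have : ∀ s : Fin (N+2), (if s ≠ q then f q s else 0)
        = f q s - (if s = q then f q s else 0) := by
      intro s; by_cases h : s = q <;> simp [h]
    simp_rw [this]
    rw [Finset.sum_sub_distrib, Finset.sum_ite_eq' Finset.univ q (f q)]
    simp
  have h4 : Equiv.swap (0 : Fin (N+2)) q 0 = q := Equiv.swap_apply_left 0 q
  rw [h3]
  rw [h2, h4] at h1
  linarith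

lemma P2 {N : ℕ} {j k : Fin (N+2)} (hjk : j ≠ k) (f : Fin (N+2) → Fin (N+2) → ℝ) :
    ∑ σ : Equiv.Perm (Fin (N+2)), f (σ j) (σ k) =
      (N.factorial : ℝ) * ∑ q, ∑ s, if s ≠ q then f q s else 0 := by
  have key : ∑ σ : Equiv.Perm (Fin (N+2)), f (σ j) (σ k)
      = ∑ σ : Equiv.Perm (Fin (N+2)), f (σ 0) (σ (Equiv.swap 0 j k)) := by
    rw [← Equiv.sum_comp (Equiv.mulRight (Equiv.swap 0 j))
        (fun σ => f (σ j) (σ k))]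
    refine Finset.sum_congr rfl fun σ _ => ?_
    simp [Equiv.Perm.mul_apply]
  have hk0 : Equiv.swap (0 : Fin (N+2)) j k ≠ 0 := by
    intro h
    apply hjk
    have : Equiv.swap (0 : Fin (N+2)) j j = 0 := Equiv.swap_apply_right 0 j
    exact ((Equiv.swap 0 j).injective (this.trans h.symm))
  rw [key, P2a hk0 f]

lemma fact1 {N : ℕ} : (((N+2).factorial : ℝ))⁻¹ * ((N+1).factorial : ℝ) = ((N:ℝ)+2)⁻¹ := by
  rw [Nat.factorial_succ (N+1)]
  push_cast
  rw [mul_inv]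
  have h : ((N+1).factorial : ℝ) ≠ 0 := by positivity
  field_simp
  ring

lemma fact2 {N : ℕ} : (((N+2).factorial : ℝ))⁻¹ * (N.factorial : ℝ)
    = (((N:ℝ)+2) * ((N:ℝ)+1))⁻¹ := by
  rw [Nat.factorial_succ (N+1), Nat.factorial_succ N]
  push_cast
  have h : (N.factorial : ℝ) ≠ 0 := by positivity
  field_simp
  ring

lemma expS {N : ℕ} (p : Fin (N+2) → Fin (N+2) → ℝ) :
    dExp (N+2) p (dSum (N+2)) = ((N:ℝ)+2)⁻¹ * ∑ j, ∑ r, p j r := by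
  unfold dExp dSum
  have h1 : ∀ σ : Equiv.Perm (Fin (N+2)),
      ∑ x : Fin (N+2) → Fin (N+2) → Bool, bw (N+2) p x *
        (∑ j, if x j (σ j) then (1:ℝ) else 0) = ∑ j, p j (σ j) := by
    intro σ
    simp_rw [Finset.mul_sum]
    rw [Finset.sum_comm]
    exact Finset.sum_congr rfl fun j _ => E1 p j (σ j)
  simp_rw [h1]
  rw [Finset.sum_comm]
  have h2 : ∀ j : Fin (N+2), ∑ σ : Equiv.Perm (Fin (N+2)), p j (σ j)
      = ((N+1).factorial : ℝ) * ∑ r, p j r := fun j => P1 j (p j)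
  simp_rw [h2, ← Finset.mul_sum, ← mul_assoc, fact1]

lemma expS2 {N : ℕ} (p : Fin (N+2) → Fin (N+2) → ℝ) :
    dExp (N+2) p (fun x σ => (dSum (N+2) x σ)^2)
      = ((N:ℝ)+2)⁻¹ * (∑ j, ∑ r, p j r)
        + (((N:ℝ)+2) * ((N:ℝ)+1))⁻¹ *
          ∑ j, ∑ k, ∑ r, ∑ s, (if j ≠ k ∧ r ≠ s then p j r * p k s else 0) := by
  unfold dExp dSum
  have h1 : ∀ σ : Equiv.Perm (Fin (N+2)),
      ∑ x : Fin (N+2) → Fin (N+2) → Bool, bw (N+2) p x *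
        (∑ j, if x j (σ j) then (1:ℝ) else 0)^2
        = ∑ j, ∑ k, (if j = k then p j (σ j) else p j (σ j) * p k (σ k)) := by
    intro σ
    have e : ∀ x : Fin (N+2) → Fin (N+2) → Bool,
        bw (N+2) p x * (∑ j, if x j (σ j) then (1:ℝ) else 0)^2
        = ∑ j, ∑ k, bw (N+2) p x * ((if x j (σ j) then (1:ℝ) else 0)
            * (if x k (σ k) then (1:ℝ) else 0)) := by
      intro x
      rw [sq, Finset.sum_mul_sum, Finset.mul_sum]
      exact Finset.sum_congr rfl fun j _ => by rw [Finset.mul_sum]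
    simp_rw [e]
    rw [Finset.sum_comm]
    refine Finset.sum_congr rfl fun j _ => ?_
    rw [Finset.sum_comm]
    refine Finset.sum_congr rfl fun k _ => ?_
    by_cases hjk : j = k
    · subst hjk
      rw [if_pos rfl]
      have e2 : ∀ x : Fin (N+2) → Fin (N+2) → Bool,
          bw (N+2) p x * ((if x j (σ j) then (1:ℝ) else 0)
            * (if x j (σ j) then (1:ℝ) else 0))
          = bw (N+2) p x * (if x j (σ j) then (1:ℝ) else 0) := by
        intro x; by_cases h : x j (σ j) <;> simp [h]
      simp_rw [e2]
      exact E1 p j (σ j)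
    · rw [if_neg hjk]
      have e2 : ∀ x : Fin (N+2) → Fin (N+2) → Bool,
          bw (N+2) p x * ((if x j (σ j) then (1:ℝ) else 0)
            * (if x k (σ k) then (1:ℝ) else 0))
          = bw (N+2) p x * (if x j (σ j) then (1:ℝ) else 0)
            * (if x k (σ k) then (1:ℝ) else 0) := fun x => (mul_assoc _ _ _).symm
      simp_rw [e2]
      exact E2 p hjk (σ j) (σ k)
  simp_rw [h1]
  rw [Finset.sum_comm]
  have h2 : ∀ j : Fin (N+2),
      ∑ σ : Equiv.Perm (Fin (N+2)), ∑ k, (if j = k then p j (σ j) else p j (σ j) * p k (σ k))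
      = (((N+1).factorial : ℝ) * ∑ r, p j r)
        + ((N.factorial : ℝ) * ∑ k, ∑ r, ∑ s, (if j ≠ k ∧ r ≠ s then p j r * p k s else 0)) := by
    intro j
    rw [Finset.sum_comm]
    have h3 : ∀ k : Fin (N+2),
        ∑ σ : Equiv.Perm (Fin (N+2)), (if j = k then p j (σ j) else p j (σ j) * p k (σ k))
        = (if j = k then ((N+1).factorial : ℝ) * ∑ r, p j r else 0)
          + ((N.factorial : ℝ) * ∑ r, ∑ s, (if j ≠ k ∧ r ≠ s then p j r * p k s else 0)) := by
      intro k
      by_cases hjk : j = k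
      · subst hjk
        simp only [eq_self_iff_true, if_true, ne_eq, not_true_eq_false, false_and, if_false]
        rw [P1 j (p j)]
        simp
      · simp only [if_neg hjk]
        rw [P2 hjk (fun q s => p j q * p k s)]
        have : ∀ q : Fin (N+2), (∑ s, if s ≠ q then p j q * p k s else 0)
            = ∑ s, (if j ≠ k ∧ q ≠ s then p j q * p k s else 0) := by
          intro q
          refine Finset.sum_congr rfl fun s _ => ?_
          by_cases h2 : s = q
          · simp [h2]
          · simp [hjk, h2, Ne.symm h2]
        simp_rw [this]
        simp
    simp_rw [h3]
    rw [Finset.sum_add_distrib, Finset.sum_ite_eq Finset.univ j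
      (fun _ => ((N+1).factorial : ℝ) * ∑ r, p j r), ← Finset.mul_sum]
    simp
  simp_rw [h2]
  rw [Finset.sum_add_distrib, mul_add, ← Finset.mul_sum, ← Finset.mul_sum,
    ← mul_assoc, ← mul_assoc, fact1, fact2]


lemma maxsplit (a : ℝ) : a = max 0 a - max 0 (-a) := by
  rcases le_total a 0 with h | h
  · rw [max_eq_left h, max_eq_right (by linarith)]; ring
  · rw [max_eq_right h, max_eq_left (by linarith)]; ring

lemma abssplit (a : ℝ) : |a| = max 0 a + max 0 (-a) := by
  rcases le_total a 0 with h | h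
  · rw [abs_of_nonpos h, max_eq_left h, max_eq_right (by linarith)]; ring
  · rw [abs_of_nonneg h, max_eq_right h, max_eq_left (by linarith)]; ring

lemma maxmul (a : ℝ) : max 0 a * max 0 (-a) = 0 := by
  rcases le_total a 0 with h | h
  · rw [max_eq_left h, zero_mul]
  · rw [max_eq_left (by linarith : -a ≤ 0), mul_zero]

lemma cskey {n : ℕ} (a : Fin n → ℝ) :
    4 * ((∑ j, max 0 (a j)) * (∑ j, max 0 (-a j))) + (∑ j, a j)^2
      ≤ (n:ℝ) * ∑ j, (a j)^2 := by
  have hP : ∑ j, a j = (∑ j, max 0 (a j)) - (∑ j, max 0 (-a j)) := by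
    rw [← Finset.sum_sub_distrib]
    exact Finset.sum_congr rfl fun j _ => maxsplit (a j)
  have habs : ∑ j, |a j| = (∑ j, max 0 (a j)) + (∑ j, max 0 (-a j)) := by
    rw [← Finset.sum_add_distrib]
    exact Finset.sum_congr rfl fun j _ => abssplit (a j)
  have hcs : (∑ j, |a j|)^2 ≤ (n:ℝ) * ∑ j, |a j|^2 := by
    have h := sq_sum_le_card_mul_sum_sq (s := (Finset.univ : Finset (Fin n)))
      (f := fun j => |a j|)
    simpa using h
  have h2 : ∀ j, |a j|^2 = (a j)^2 := fun j => sq_abs (a j)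
  simp_rw [h2] at hcs
  calc 4 * ((∑ j, max 0 (a j)) * (∑ j, max 0 (-a j))) + (∑ j, a j)^2
      = (∑ j, |a j|)^2 := by rw [hP, habs]; ring
    _ ≤ (n:ℝ) * ∑ j, (a j)^2 := hcs

lemma sum4comm {α : Type*} [Fintype α] (f : α → α → α → α → ℝ) :
    ∑ j, ∑ k, ∑ r, ∑ s, f j k r s = ∑ r, ∑ s, ∑ j, ∑ k, f j k r s := by
  have h1 : ∀ j : α, ∑ k, ∑ r, ∑ s, f j k r s = ∑ r, ∑ k, ∑ s, f j k r s :=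
    fun j => Finset.sum_comm
  have h2 : ∀ (j r : α), ∑ k, ∑ s, f j k r s = ∑ s, ∑ k, f j k r s :=
    fun j r => Finset.sum_comm
  simp_rw [h1, h2]
  rw [Finset.sum_comm]
  exact Finset.sum_congr rfl fun r _ => Finset.sum_comm

lemma pullite {n : ℕ} (c : Prop) [Decidable c] (g : Fin n → Fin n → ℝ) :
    ∑ r : Fin n, ∑ s : Fin n, (if c then g r s else 0)
      = if c then ∑ r : Fin n, ∑ s : Fin n, g r s else 0 := by
  by_cases h : c <;> simp [h]

lemma Lid {n : ℕ} (p : Fin n → Fin n → ℝ) :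
    ∑ j : Fin n, ∑ k : Fin n, ∑ r : Fin n, ∑ s : Fin n,
      (if j ≠ k ∧ r ≠ s then max 0 (p j r - p j s) * max 0 (p k s - p k r) else 0)
      = ∑ r : Fin n, ∑ s : Fin n, (if r ≠ s then
          (∑ j, max 0 (p j r - p j s)) * (∑ k, max 0 (p k s - p k r)) else 0) := by
  rw [sum4comm]
  refine Finset.sum_congr rfl fun r _ => Finset.sum_congr rfl fun s _ => ?_
  by_cases hrs : r = s
  · simp [hrs]
  · rw [if_pos hrs]
    have e1 : ∀ j k : Fin n,
        (if j ≠ k ∧ r ≠ s then max 0 (p j r - p j s) * max 0 (p k s - p k r) else 0)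
        = max 0 (p j r - p j s) * max 0 (p k s - p k r)
          - (if j = k then max 0 (p j r - p j s) * max 0 (p k s - p k r) else 0) := by
      intro j k; by_cases h : j = k <;> simp [h, hrs]
    simp_rw [e1, Finset.sum_sub_distrib]
    rw [← Finset.sum_mul_sum]
    have e2 : ∀ j : Fin n,
        ∑ k, (if j = k then max 0 (p j r - p j s) * max 0 (p k s - p k r) else 0)
        = max 0 (p j r - p j s) * max 0 (p j s - p j r) := by
      intro j; rw [Finset.sum_ite_eq]; simp
    simp_rw [e2]
    have e3 : ∀ j : Fin n, max 0 (p j r - p j s) * max 0 (p j s - p j r) = 0 := by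
      intro j
      have h4 : p j s - p j r = -(p j r - p j s) := by ring
      rw [h4]; exact maxmul _
    simp_rw [e3]
    simp

lemma Did {n : ℕ} (p : Fin n → Fin n → ℝ) :
    ∑ j : Fin n, ∑ k : Fin n, ∑ r : Fin n, ∑ s : Fin n,
      (if j ≠ k ∧ r ≠ s then p j r * p k s else 0)
      = (∑ j, ∑ r, p j r)^2 - (∑ j, (∑ r, p j r)^2) - (∑ r, (∑ j, p j r)^2)
        + ∑ j, ∑ r, (p j r)^2 := by
  have e : ∀ j k r s : Fin n, (if j ≠ k ∧ r ≠ s then p j r * p k s else 0)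
      = p j r * p k s - (if j = k then p j r * p k s else 0)
        - (if r = s then p j r * p k s else 0) + (if j = k ∧ r = s then p j r * p k s else 0) := by
    intro j k r s
    by_cases h1 : j = k <;> by_cases h2 : r = s <;> simp [h1, h2]
  simp_rw [e]
  simp only [Finset.sum_sub_distrib, Finset.sum_add_distrib]
  have T : ∑ j : Fin n, ∑ k : Fin n, ∑ r : Fin n, ∑ s : Fin n, p j r * p k s
      = (∑ j, ∑ r, p j r)^2 := by
    have h1 : ∀ j k : Fin n, ∑ r : Fin n, ∑ s : Fin n, p j r * p k s
        = (∑ r, p j r) * (∑ s, p k s) := fun j k => (Finset.sum_mul_sum _ _ _ _).symm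
    simp_rw [h1]
    rw [← Finset.sum_mul_sum, sq]
  have U1 : ∑ j : Fin n, ∑ k : Fin n, ∑ r : Fin n, ∑ s : Fin n,
      (if j = k then p j r * p k s else 0) = ∑ j, (∑ r, p j r)^2 := by
    have h1 : ∀ j k : Fin n, ∑ r : Fin n, ∑ s : Fin n, (if j = k then p j r * p k s else 0)
        = if j = k then (∑ r, p j r) * (∑ s, p k s) else 0 := by
      intro j k
      rw [pullite]
      by_cases h : j = k <;> simp [h, (Finset.sum_mul_sum _ _ _ _).symm]
    simp_rw [h1]
    refine Finset.sum_congr rfl fun j _ => ?_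
    rw [Finset.sum_ite_eq]
    simp [sq]
  have U2 : ∑ j : Fin n, ∑ k : Fin n, ∑ r : Fin n, ∑ s : Fin n,
      (if r = s then p j r * p k s else 0) = ∑ r, (∑ j, p j r)^2 := by
    have h1 : ∀ j k r : Fin n, ∑ s : Fin n, (if r = s then p j r * p k s else 0)
        = p j r * p k r := by
      intro j k r
      rw [Finset.sum_ite_eq]
      simp
    simp_rw [h1]
    have h2 : ∀ j : Fin n, ∑ k : Fin n, ∑ r : Fin n, p j r * p k r
        = ∑ r : Fin n, ∑ k : Fin n, p j r * p k r := fun j => Finset.sum_comm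
    simp_rw [h2]
    rw [Finset.sum_comm]
    refine Finset.sum_congr rfl fun r _ => ?_
    rw [sq, Finset.sum_mul_sum]
  have U3 : ∑ j : Fin n, ∑ k : Fin n, ∑ r : Fin n, ∑ s : Fin n,
      (if j = k ∧ r = s then p j r * p k s else 0) = ∑ j, ∑ r, (p j r)^2 := by
    have h1 : ∀ j k r s : Fin n, (if j = k ∧ r = s then p j r * p k s else 0)
        = if j = k then (if r = s then p j r * p k s else 0) else 0 := by
      intro j k r s
      by_cases h1 : j = k <;> by_cases h2 : r = s <;> simp [h1, h2]
    simp_rw [h1]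
    have h2 : ∀ j k r : Fin n, ∑ s : Fin n, (if r = s then p j r * p k s else 0)
        = p j r * p k r := by
      intro j k r
      rw [Finset.sum_ite_eq]; simp
    have h3 : ∀ j k : Fin n, ∑ r : Fin n, ∑ s : Fin n,
        (if j = k then (if r = s then p j r * p k s else 0) else 0)
        = if j = k then ∑ r, p j r * p k r else 0 := by
      intro j k
      rw [pullite]
      by_cases h : j = k <;> simp [h, h2]
    simp_rw [h3]
    refine Finset.sum_congr rfl fun j _ => ?_
    rw [Finset.sum_ite_eq]
    simp [sq]
  rw [T, U1, U2, U3]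

lemma A2id {n : ℕ} (p : Fin n → Fin n → ℝ) :
    ∑ r : Fin n, ∑ s : Fin n, (∑ j, (p j r - p j s)^2)
      = 2*(n:ℝ)*(∑ j, ∑ r, (p j r)^2) - 2*(∑ j, (∑ r, p j r)^2) := by
  have e : ∀ r s j : Fin n, (p j r - p j s)^2
      = (p j r)^2 + (p j s)^2 - 2*(p j r * p j s) := by intro r s j; ring
  simp_rw [e]
  simp only [Finset.sum_sub_distrib, Finset.sum_add_distrib]
  have T1 : ∑ r : Fin n, ∑ s : Fin n, ∑ j : Fin n, (p j r)^2
      = (n:ℝ) * ∑ j, ∑ r, (p j r)^2 := by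
    have h1 : ∀ r : Fin n, ∑ s : Fin n, ∑ j : Fin n, (p j r)^2
        = (n:ℝ) * ∑ j : Fin n, (p j r)^2 := by
      intro r; rw [Finset.sum_const, Finset.card_univ, Fintype.card_fin, nsmul_eq_mul]
    simp_rw [h1, ← Finset.mul_sum]
    congr 1
    exact Finset.sum_comm
  have T2 : ∑ r : Fin n, ∑ s : Fin n, ∑ j : Fin n, (p j s)^2
      = (n:ℝ) * ∑ j, ∑ r, (p j r)^2 := by
    rw [Finset.sum_const, Finset.card_univ, Fintype.card_fin, nsmul_eq_mul]
    congr 1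
    exact Finset.sum_comm
  have T3 : ∑ r : Fin n, ∑ s : Fin n, ∑ j : Fin n, 2*(p j r * p j s)
      = 2 * ∑ j, (∑ r, p j r)^2 := by
    have h1 : ∀ r s : Fin n, ∑ j : Fin n, 2*(p j r * p j s)
        = 2 * ∑ j, p j r * p j s := fun r s => (Finset.mul_sum _ _ _).symm
    simp_rw [h1, ← Finset.mul_sum]
    congr 1
    have h2 : ∀ r : Fin n, ∑ s : Fin n, ∑ j : Fin n, p j r * p j s
        = ∑ j : Fin n, ∑ s : Fin n, p j r * p j s := fun r => Finset.sum_comm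
    simp_rw [h2]
    rw [Finset.sum_comm]
    refine Finset.sum_congr rfl fun j _ => ?_
    rw [sq, Finset.sum_mul_sum]
  rw [T1, T2, T3]
  ring

lemma A1id {n : ℕ} (p : Fin n → Fin n → ℝ) :
    ∑ r : Fin n, ∑ s : Fin n, (∑ j, (p j r - p j s))^2
      = 2*(n:ℝ)*(∑ r, (∑ j, p j r)^2) - 2*(∑ j, ∑ r, p j r)^2 := by
  have e : ∀ r s : Fin n, (∑ j, (p j r - p j s))^2
      = ((∑ j, p j r) - (∑ j, p j s))^2 := by
    intro r s; rw [Finset.sum_sub_distrib]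
  simp_rw [e]
  have e2 : ∀ r s : Fin n, ((∑ j, p j r) - (∑ j, p j s))^2
      = (∑ j, p j r)^2 + (∑ j, p j s)^2 - 2*((∑ j, p j r) * (∑ j, p j s)) := by
    intro r s; ring
  simp_rw [e2]
  simp only [Finset.sum_sub_distrib, Finset.sum_add_distrib]
  have T1 : ∑ r : Fin n, ∑ s : Fin n, (∑ j, p j r)^2
      = (n:ℝ) * ∑ r, (∑ j, p j r)^2 := by
    have h1 : ∀ r : Fin n, ∑ s : Fin n, (∑ j, p j r)^2
        = (n:ℝ) * (∑ j, p j r)^2 := by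
      intro r; rw [Finset.sum_const, Finset.card_univ, Fintype.card_fin, nsmul_eq_mul]
    simp_rw [h1, ← Finset.mul_sum]
  have T2 : ∑ r : Fin n, ∑ s : Fin n, (∑ j, p j s)^2
      = (n:ℝ) * ∑ r, (∑ j, p j r)^2 := by
    rw [Finset.sum_const, Finset.card_univ, Fintype.card_fin, nsmul_eq_mul]
  have T3 : ∑ r : Fin n, ∑ s : Fin n, 2*((∑ j, p j r) * (∑ j, p j s))
      = 2 * (∑ r, ∑ j, p j r)^2 := by
    have h1 : ∀ r : Fin n, ∑ s : Fin n, 2*((∑ j, p j r) * (∑ j, p j s))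
        = 2 * ((∑ j, p j r) * (∑ s, ∑ j, p j s)) := by
      intro r
      rw [← Finset.mul_sum, ← Finset.mul_sum]
    simp_rw [h1, ← Finset.mul_sum]
    rw [← Finset.sum_mul, sq]
  rw [T1, T2, T3]
  have : (∑ r : Fin n, ∑ j : Fin n, p j r) = ∑ j, ∑ r, p j r := Finset.sum_comm
  rw [this]
  ring

theorem gamma'_le_var_sub (n : ℕ) (hn : 2 ≤ n) (p : Fin n → Fin n → ℝ)
    (hp : ∀ j r, p j r ∈ Set.Icc (0:ℝ) 1) :
    (2 / ((n:ℝ)^2 * ((n:ℝ) - 1))) *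
      ∑ j : Fin n, ∑ k : Fin n, ∑ r : Fin n, ∑ s : Fin n,
        (if j ≠ k ∧ r ≠ s then max 0 (p j r - p j s) * max 0 (p k s - p k r) else 0)
    ≤ dVar n p - (n:ℝ)⁻¹ * ∑ j : Fin n, ∑ r : Fin n, p j r * (1 - p j r) := by
  obtain ⟨N, rfl⟩ : ∃ N, n = N + 2 := ⟨n - 2, by omega⟩
  have hdv : dVar (N+2) p = ((N:ℝ)+2)⁻¹ * (∑ j, ∑ r, p j r)
      + (((N:ℝ)+2) * ((N:ℝ)+1))⁻¹ *
        (∑ j, ∑ k, ∑ r, ∑ s, (if j ≠ k ∧ r ≠ s then p j r * p k s else 0))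
      - (((N:ℝ)+2)⁻¹ * ∑ j, ∑ r, p j r)^2 := by
    unfold dVar
    rw [expS2, expS]
  rw [hdv, Lid p, Did p]
  have hpq : ∑ j : Fin (N+2), ∑ r, p j r * (1 - p j r)
      = (∑ j, ∑ r, p j r) - ∑ j, ∑ r, (p j r)^2 := by
    have e : ∀ j r : Fin (N+2), p j r * (1 - p j r) = p j r - (p j r)^2 := by
      intro j r; ring
    simp_rw [e]
    simp only [Finset.sum_sub_distrib]
  rw [hpq]
  push_cast
  set Sq := ∑ j : Fin (N+2), ∑ r, (p j r)^2 with hSq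
  set SR := ∑ j : Fin (N+2), (∑ r, p j r)^2 with hSR
  set SQ := ∑ r : Fin (N+2), (∑ j, p j r)^2 with hSQ
  set T1 := ∑ j : Fin (N+2), ∑ r, p j r with hT1
  set M := ∑ r : Fin (N+2), ∑ s : Fin (N+2), (if r ≠ s then
      (∑ j, max 0 (p j r - p j s)) * (∑ k, max 0 (p k s - p k r)) else 0) with hM
  have key : 4 * M ≤ ((N:ℝ)+2) * (2*((N:ℝ)+2)*Sq - 2*SR) - (2*((N:ℝ)+2)*SQ - 2*T1^2) := by
    have e4 : ∀ r s : Fin (N+2), (4:ℝ) * (if r ≠ s then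
        (∑ j, max 0 (p j r - p j s)) * (∑ k, max 0 (p k s - p k r)) else 0)
        = if r ≠ s then 4 * ((∑ j, max 0 (p j r - p j s)) * (∑ k, max 0 (p k s - p k r))) else 0 := by
      intro r s; split <;> ring
    have lhs4 : 4 * M = ∑ r : Fin (N+2), ∑ s : Fin (N+2), (if r ≠ s then
        4 * ((∑ j, max 0 (p j r - p j s)) * (∑ k, max 0 (p k s - p k r))) else 0) := by
      rw [hM, Finset.mul_sum]
      refine Finset.sum_congr rfl fun r _ => ?_
      rw [Finset.mul_sum]
      exact Finset.sum_congr rfl fun s _ => e4 r s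
    have rhsid : ∑ r : Fin (N+2), ∑ s : Fin (N+2),
        (((N:ℝ)+2) * (∑ j, (p j r - p j s)^2) - (∑ j, (p j r - p j s))^2)
        = ((N:ℝ)+2) * (2*((N:ℝ)+2)*Sq - 2*SR) - (2*((N:ℝ)+2)*SQ - 2*T1^2) := by
      have splitter : ∑ r : Fin (N+2), ∑ s : Fin (N+2),
          (((N:ℝ)+2) * (∑ j, (p j r - p j s)^2) - (∑ j, (p j r - p j s))^2)
          = ((N:ℝ)+2) * (∑ r : Fin (N+2), ∑ s : Fin (N+2), ∑ j, (p j r - p j s)^2)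
            - ∑ r : Fin (N+2), ∑ s : Fin (N+2), (∑ j, (p j r - p j s))^2 := by
        rw [Finset.mul_sum, ← Finset.sum_sub_distrib]
        refine Finset.sum_congr rfl fun r _ => ?_
        rw [Finset.mul_sum, ← Finset.sum_sub_distrib]
      rw [splitter]
      have hA2 := A2id p
      have hA1 := A1id p
      push_cast at hA2 hA1
      rw [hA2, hA1, ← hSq, ← hSR, ← hSQ, ← hT1]
    rw [lhs4, ← rhsid]
    refine Finset.sum_le_sum fun r _ => Finset.sum_le_sum fun s _ => ?_
    by_cases hrs : r = s
    · subst hrs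
      simp
    · rw [if_pos hrs]
      have hk := cskey (fun j => p j r - p j s)
      have e5 : ∀ k : Fin (N+2), -(p k r - p k s) = p k s - p k r := by intro k; ring
      simp_rw [e5] at hk
      push_cast at hk
      linarith
  have hpos : (0:ℝ) < 2*((N:ℝ)+2)^2*((N:ℝ)+1) := by positivity
  have step : 2 / (((N:ℝ)+2)^2*(((N:ℝ)+2)-1)) * M
      = (2*((N:ℝ)+2)^2*((N:ℝ)+1))⁻¹ * (4*M) := by
    have h9 : ((N:ℝ)+2)-1 = (N:ℝ)+1 := by ring
    rw [h9]
    field_simp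
    ring
  rw [step]
  have step2 : (2*((N:ℝ)+2)^2*((N:ℝ)+1))⁻¹ * (4*M)
      ≤ (2*((N:ℝ)+2)^2*((N:ℝ)+1))⁻¹ *
        (((N:ℝ)+2) * (2*((N:ℝ)+2)*Sq - 2*SR) - (2*((N:ℝ)+2)*SQ - 2*T1^2)) :=
    mul_le_mul_of_nonneg_left key (by positivity)
  refine le_trans step2 (le_of_eq ?_)
  have h1 : ((N:ℝ)+2) ≠ 0 := by positivity
  have h2 : ((N:ℝ)+1) ≠ 0 := by positivity
  field_simp
  ring
end

section
/- If (p_{j,r}) ∈ {0,1}^{[n]×[n]}, then γ' = (2/(n-1)) Σ_{(r,s) distinct} ( p̄_{·,r} − (1/n) Σ_j p_{j,r} p_{j,s} )( p̄_{·,s} − (1/n) Σ_j p_{j,r} p_{j,s} ), where γ' = (2/(n²(n-1))) Σ_{(j,k) distinct} Σ_{(r,s) distinct} (p_{j,r}-p_{j,s})_+ (p_{k,s}-p_{k,r})_+ and p̄_{·,r} = (1/n) Σ_j p_{j,r}. -/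
/-!
On `{0,1}`-valued entries the positive part linearises: `(a - b)₊ = a - a b`. With this the
summand of `γ'` for `j ≠ k` factors as `(p_{j,r} - p_{j,r} p_{j,s}) (p_{k,s} - p_{k,r} p_{k,s})`,
and this product also vanishes for `j = k`, so the restriction `j ≠ k` can be dropped. The sum
over all pairs `(j, k)` then splits into a product of two column sums.
-/

open Finset

theorem sub_mul_mul_sub_mul_eq_zero_of_mul_self {R : Type*} [CommRing R] {a : R} (b : R)
    (ha : a * a = a) : (a - a * b) * (b - a * b) = 0 := by
  linear_combination (b * b - b) * ha

section ZeroOne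

variable {R ι κ : Type*} [CommRing R] [LinearOrder R] [IsStrictOrderedRing R]

theorem max_zero_sub_eq_sub_mul_of_zero_one {a b : R} (ha : a = 0 ∨ a = 1)
    (hb : b = 0 ∨ b = 1) : max 0 (a - b) = a - a * b := by
  rcases ha with rfl | rfl <;> rcases hb with rfl | rfl <;> norm_num

variable [DecidableEq ι] [DecidableEq κ] {p : ι → κ → R}

theorem posPart_summand_eq_of_zero_one (hp : ∀ j r, p j r = 0 ∨ p j r = 1) (j k : ι) (r s : κ) :
    (if j ≠ k ∧ r ≠ s then max 0 (p j r - p j s) * max 0 (p k s - p k r) else 0)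
      = if r ≠ s then (p j r - p j r * p j s) * (p k s - p k r * p k s) else 0 := by
  rcases eq_or_ne r s with rfl | hrs
  · simp
  rcases eq_or_ne j k with rfl | hjk
  · have hidem : p j r * p j r = p j r := by rcases hp j r with h | h <;> simp [h]
    rw [if_neg (by simp), if_pos hrs]
    exact (sub_mul_mul_sub_mul_eq_zero_of_mul_self _ hidem).symm
  · rw [if_pos ⟨hjk, hrs⟩, if_pos hrs, max_zero_sub_eq_sub_mul_of_zero_one (hp j r) (hp j s),
      max_zero_sub_eq_sub_mul_of_zero_one (hp k s) (hp k r), mul_comm (p k s)]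

theorem sum_offDiag_posPart_mul_posPart_of_zero_one [Fintype ι] [Fintype κ]
    (hp : ∀ j r, p j r = 0 ∨ p j r = 1) :
    ∑ j, ∑ k, ∑ r, ∑ s,
        (if j ≠ k ∧ r ≠ s then max 0 (p j r - p j s) * max 0 (p k s - p k r) else 0)
      = ∑ r, ∑ s, if r ≠ s then
          (∑ j, p j r - ∑ j, p j r * p j s) * (∑ j, p j s - ∑ j, p j r * p j s) else 0 := by
  simp only [posPart_summand_eq_of_zero_one hp, ← sum_sub_distrib, sum_mul_sum, ite_sum_zero]
  rw [sum_comm_cycle]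
  exact sum_congr rfl fun r _ => sum_comm_cycle

end ZeroOne

theorem gamma'_eq_of_zero_one_general (n : ℕ) (p : Fin n → Fin n → ℝ)
    (hp01 : ∀ j r, p j r = 0 ∨ p j r = 1) :
    (2 / ((n:ℝ)^2 * ((n:ℝ) - 1))) *
      ∑ j : Fin n, ∑ k : Fin n, ∑ r : Fin n, ∑ s : Fin n,
        (if j ≠ k ∧ r ≠ s then max 0 (p j r - p j s) * max 0 (p k s - p k r) else 0)
    = (2 / ((n:ℝ) - 1)) *
      ∑ r : Fin n, ∑ s : Fin n,
        (if r ≠ s then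
          ((n:ℝ)⁻¹ * ∑ j : Fin n, p j r - (n:ℝ)⁻¹ * ∑ j : Fin n, p j r * p j s) *
          ((n:ℝ)⁻¹ * ∑ j : Fin n, p j s - (n:ℝ)⁻¹ * ∑ j : Fin n, p j r * p j s)
         else 0) := by
  have scale : ∀ r s : Fin n,
      (if r ≠ s then
          ((n:ℝ)⁻¹ * ∑ j, p j r - (n:ℝ)⁻¹ * ∑ j, p j r * p j s) *
          ((n:ℝ)⁻¹ * ∑ j, p j s - (n:ℝ)⁻¹ * ∑ j, p j r * p j s) else 0)
        = (n:ℝ)⁻¹ ^ 2 * if r ≠ s then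
          (∑ j, p j r - ∑ j, p j r * p j s) * (∑ j, p j s - ∑ j, p j r * p j s) else 0 := by
    intro r s
    split_ifs <;> ring
  simp only [scale, ← mul_sum, sum_offDiag_posPart_mul_posPart_of_zero_one hp01]
  rw [div_eq_mul_inv, div_eq_mul_inv, mul_inv, inv_pow]
  ring

theorem gamma'_eq_of_zero_one (n : ℕ) (hn : 2 ≤ n) (p : Fin n → Fin n → ℝ)
    (hp01 : ∀ j r, p j r = 0 ∨ p j r = 1) :
    (2 / ((n:ℝ)^2 * ((n:ℝ) - 1))) *
      ∑ j : Fin n, ∑ k : Fin n, ∑ r : Fin n, ∑ s : Fin n,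
        (if j ≠ k ∧ r ≠ s then max 0 (p j r - p j s) * max 0 (p k s - p k r) else 0)
    = (2 / ((n:ℝ) - 1)) *
      ∑ r : Fin n, ∑ s : Fin n,
        (if r ≠ s then
          ((n:ℝ)⁻¹ * ∑ j : Fin n, p j r - (n:ℝ)⁻¹ * ∑ j : Fin n, p j r * p j s) *
          ((n:ℝ)⁻¹ * ∑ j : Fin n, p j s - (n:ℝ)⁻¹ * ∑ j : Fin n, p j r * p j s)
         else 0) :=
  gamma'_eq_of_zero_one_general n p hp01
end

section
/- Let Y be Poisson(t) distributed, F, G finite sets of equal cardinality m ≥ 2, (p_{j,r}) ∈ [0,1]^{F×G}, X_{j,r} independent Bernoulli(p_{j,r}), ρ uniform on injections from F to G, all independent. Let W = Σ_{j∈F} X_{j,ρ(j)}, μ = EW, W_j = W − X_{j,ρ(j)}, W_{j,k} = W − X_{j,ρ(j)} − X_{k,ρ(k)}. Then for any bounded function h : ℤ≥0 → ℝ, E(μ h(W+1) − W h(W)) = Σ_{j∈F} E( p̄'_{j,·} p_{j,ρ(j)} Δh(W_j + 1) ) + (1/(2m)) Σ_{(j,k)∈F, j≠k} E( (p_{j,ρ(j)}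 − p_{j,ρ(k)})(p_{k,ρ(j)} − p_{k,ρ(k)}) Δh(W_{j,k} + 1) ), where p̄'_{j,·} = (1/m) Σ_{r∈G} p_{j,r} and Δh(x) = h(x+1) − h(x). -/
open Finset Real

/-- Expectation of `f (X, ρ)` where the Bernoulli array `X = (X_{j,r})_{(j,r) ∈ F × G}`
(independent entries with success probabilities `p`) and the uniformly distributed random
bijection `ρ : F ≃ G` are independent. -/
noncomputable def gExp (F G : Type) [Fintype F] [Fintype G] [DecidableEq F] [DecidableEq G]
    (p : F → G → ℝ) (f : (F → G → Bool) → (F ≃ G) → ℝ) : ℝ :=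
  (Fintype.card (F ≃ G) : ℝ)⁻¹ *
    ∑ ρ : F ≃ G, ∑ x : F → G → Bool,
      (∏ j : F, ∏ r : G, if x j r then p j r else 1 - p j r) * f x ρ

/-- The value of `W = ∑_{j ∈ F} X_{j,ρ(j)}` at an outcome. -/
def gCount (F G : Type) [Fintype F] [DecidableEq F] [DecidableEq G]
    (x : F → G → Bool) (ρ : F ≃ G) : ℕ :=
  (Finset.univ.filter fun j : F => x j (ρ j)).card

section aux

set_option linter.unusedSectionVars false

variable {F : Type} [Fintype F] [DecidableEq F]

noncomputable def dw (q : F → ℝ) (d : F → Bool) : ℝ :=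
  ∏ i, if d i then q i else 1 - q i

lemma dw_erase (q : F → ℝ) (d : F → Bool) (k : F) :
    dw q d = (if d k then q k else 1 - q k) *
      ∏ i ∈ univ.erase k, (if d i then q i else 1 - q i) := by
  rw [dw, ← Finset.mul_prod_erase univ _ (mem_univ k)]

lemma dw_update (q : F → ℝ) (d : F → Bool) (k : F) (b : Bool) :
    dw q (Function.update d k b) = (if b then q k else 1 - q k) *
      ∏ i ∈ univ.erase k, (if d i then q i else 1 - q i) := by
  rw [dw_erase q _ k, Function.update_self]
  congr 1
  refine Finset.prod_congr rfl fun i hi => ?_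
  rw [Function.update_of_ne (mem_erase.mp hi).1]

lemma flip_involutive (k : F) :
    Function.Involutive (fun d : F → Bool => Function.update d k (!d k)) := by
  intro d; funext i
  rcases eq_or_ne i k with rfl | hik
  · simp
  · simp [Function.update_of_ne hik]

lemma sum_pair (k : F) (f : (F → Bool) → ℝ) :
    (2:ℝ) * ∑ d : F → Bool, f d
      = ∑ d : F → Bool, (f d + f (Function.update d k (!d k))) := by
  rw [Finset.sum_add_distrib]
  have := Equiv.sum_comp (flip_involutive k).toPerm f
  simp only [Function.Involutive.coe_toPerm] at this
  rw [this]; ring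

lemma cond_sum (q : F → ℝ) (k : F) (α β : (F → Bool) → ℝ)
    (hα : ∀ d b, α (Function.update d k b) = α d)
    (hβ : ∀ d b, β (Function.update d k b) = β d) :
    ∑ d : F → Bool, dw q d * (if d k then α d else β d)
      = ∑ d : F → Bool, dw q d * (q k * α d + (1 - q k) * β d) := by
  have h2 : ∀ g g' : (F → Bool) → ℝ,
      ((2:ℝ) * ∑ d : F → Bool, g d = 2 * ∑ d : F → Bool, g' d) →
      (∑ d : F → Bool, g d = ∑ d : F → Bool, g' d) := by
    intro g g' hgg; linarith
  apply h2
  rw [sum_pair k, sum_pair k]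
  refine Finset.sum_congr rfl fun d _ => ?_
  rw [dw_erase q d k, dw_update q d k (!d k)]
  simp only [hα, hβ, Function.update_self]
  cases hdk : d k <;> simp <;> ring

lemma irrel_sum (q q' : F → ℝ) (k : F) (hq : ∀ i, i ≠ k → q i = q' i)
    (α : (F → Bool) → ℝ) (hα : ∀ d b, α (Function.update d k b) = α d) :
    ∑ d : F → Bool, dw q d * α d = ∑ d : F → Bool, dw q' d * α d := by
  have h2 : ∀ g g' : (F → Bool) → ℝ,
      ((2:ℝ) * ∑ d : F → Bool, g d = 2 * ∑ d : F → Bool, g' d) →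
      (∑ d : F → Bool, g d = ∑ d : F → Bool, g' d) := by
    intro g g' hgg; linarith
  apply h2
  rw [sum_pair k, sum_pair k]
  refine Finset.sum_congr rfl fun d _ => ?_
  have hR : ∀ i ∈ univ.erase k, (if d i then q i else 1 - q i)
      = (if d i then q' i else 1 - q' i) := by
    intro i hi; rw [hq i (mem_erase.mp hi).1]
  rw [dw_erase q d k, dw_update q d k (!d k), dw_erase q' d k, dw_update q' d k (!d k),
    Finset.prod_congr rfl hR]
  simp only [hα, Function.update_self]
  cases hdk : d k <;> simp <;> ring

def Wc (d : F → Bool) : ℕ := #(univ.filter fun i => d i)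
def Wj (j : F) (d : F → Bool) : ℕ := #(univ.filter fun i => i ≠ j ∧ d i)
def Wjk (j k : F) (d : F → Bool) : ℕ := #(univ.filter fun i => i ≠ j ∧ i ≠ k ∧ d i)

lemma Wc_split (j : F) (d : F → Bool) :
    Wc d = Wj j d + (if d j then 1 else 0) := by
  rw [Wc, Wj, Finset.card_filter, Finset.card_filter,
    ← Finset.add_sum_erase univ _ (mem_univ j),
    ← Finset.add_sum_erase univ (fun i => if i ≠ j ∧ d i then 1 else 0) (mem_univ j)]
  have : ∑ i ∈ univ.erase j, (if d i then 1 else 0)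
      = ∑ i ∈ univ.erase j, (if i ≠ j ∧ d i then 1 else 0) := by
    refine Finset.sum_congr rfl fun i hi => ?_
    simp [(mem_erase.mp hi).1]
  rw [this]
  simp
  omega

lemma Wj_split (j k : F) (hkj : k ≠ j) (d : F → Bool) :
    Wj j d = Wjk j k d + (if d k then 1 else 0) := by
  rw [Wj, Wjk, Finset.card_filter, Finset.card_filter,
    ← Finset.add_sum_erase univ _ (mem_univ k),
    ← Finset.add_sum_erase univ (fun i => if i ≠ j ∧ i ≠ k ∧ d i then 1 else 0) (mem_univ k)]
  have : ∑ i ∈ univ.erase k, (if i ≠ j ∧ d i then 1 else 0)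
      = ∑ i ∈ univ.erase k, (if i ≠ j ∧ i ≠ k ∧ d i then 1 else 0) := by
    refine Finset.sum_congr rfl fun i hi => ?_
    simp [(mem_erase.mp hi).1]
  rw [this]
  simp [hkj]
  omega

lemma Wj_ignore (j : F) (d : F → Bool) (b : Bool) :
    Wj j (Function.update d j b) = Wj j d := by
  rw [Wj, Wj]; congr 1; ext i
  simp only [mem_filter, mem_univ, true_and, and_congr_right_iff]
  intro hij
  rw [Function.update_of_ne hij]

lemma Wjk_ignore_j (j k : F) (d : F → Bool) (b : Bool) :
    Wjk j k (Function.update d j b) = Wjk j k d := by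
  rw [Wjk, Wjk]; congr 1; ext i
  simp only [mem_filter, mem_univ, true_and, and_congr_right_iff]
  intro hij _
  rw [Function.update_of_ne hij]

lemma Wjk_ignore_k (j k : F) (d : F → Bool) (b : Bool) :
    Wjk j k (Function.update d k b) = Wjk j k d := by
  rw [Wjk, Wjk]; congr 1; ext i
  simp only [mem_filter, mem_univ, true_and, and_congr_right_iff]
  intro _ hik
  rw [Function.update_of_ne hik]

lemma stepB (q : F → ℝ) (h : ℕ → ℝ) (j : F) :
    ∑ d : F → Bool, dw q d * h (Wc d + 1)
      = (∑ d : F → Bool, dw q d * h (Wj j d + 1))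
        + q j * ∑ d : F → Bool, dw q d * (h (Wj j d + 2) - h (Wj j d + 1)) := by
  have e1 : ∀ d : F → Bool, h (Wc d + 1)
      = if d j then h (Wj j d + 2) else h (Wj j d + 1) := by
    intro d; rw [Wc_split j d]; cases hdj : d j <;> simp
  rw [Finset.sum_congr rfl fun d _ => by rw [e1 d]]
  rw [cond_sum q j (fun d => h (Wj j d + 2)) (fun d => h (Wj j d + 1))
    (fun d b => by simp only [Wj_ignore]) (fun d b => by simp only [Wj_ignore])]
  rw [Finset.mul_sum, ← Finset.sum_add_distrib]
  refine Finset.sum_congr rfl fun d _ => by ring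

lemma stepD (q : F → ℝ) (h : ℕ → ℝ) (j k : F) (hkj : k ≠ j) :
    ∑ d : F → Bool, dw q d * h (Wj j d + 1)
      = (∑ d : F → Bool, dw q d * h (Wjk j k d + 1))
        + q k * ∑ d : F → Bool, dw q d * (h (Wjk j k d + 2) - h (Wjk j k d + 1)) := by
  have e1 : ∀ d : F → Bool, h (Wj j d + 1)
      = if d k then h (Wjk j k d + 2) else h (Wjk j k d + 1) := by
    intro d; rw [Wj_split j k hkj d]; cases hdk : d k <;> simp
  rw [Finset.sum_congr rfl fun d _ => by rw [e1 d]]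
  rw [cond_sum q k (fun d => h (Wjk j k d + 2)) (fun d => h (Wjk j k d + 1))
    (fun d b => by simp only [Wjk_ignore_k]) (fun d b => by simp only [Wjk_ignore_k])]
  rw [Finset.mul_sum, ← Finset.sum_add_distrib]
  refine Finset.sum_congr rfl fun d _ => by ring

lemma stepA (q : F → ℝ) (h : ℕ → ℝ) :
    ∑ d : F → Bool, dw q d * ((Wc d : ℝ) * h (Wc d))
      = ∑ j : F, q j * ∑ d : F → Bool, dw q d * h (Wj j d + 1) := by
  have e1 : ∀ d : F → Bool, (Wc d : ℝ) * h (Wc d)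
      = ∑ j : F, (if d j then h (Wj j d + 1) else 0) := by
    intro d
    have : (Wc d : ℝ) = ∑ j : F, (if d j then (1:ℝ) else 0) := by
      rw [Wc, Finset.card_filter]; push_cast; rfl
    rw [this, Finset.sum_mul]
    refine Finset.sum_congr rfl fun j _ => ?_
    rw [Wc_split j d]; cases hdj : d j <;> simp
  rw [Finset.sum_congr rfl fun d _ => by rw [e1 d]]
  rw [Finset.sum_congr rfl fun d (_ : d ∈ univ) => Finset.mul_sum ..]
  rw [Finset.sum_comm]
  refine Finset.sum_congr rfl fun j _ => ?_
  rw [cond_sum q j (fun d => h (Wj j d + 1)) (fun _ => 0)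
    (fun d b => by simp only [Wj_ignore]) (fun d b => rfl)]
  rw [Finset.mul_sum]
  refine Finset.sum_congr rfl fun d _ => by ring

lemma irrel2 (q q' : F → ℝ) (j k : F) (hq : ∀ i, i ≠ j → i ≠ k → q i = q' i)
    (φ : (F → Bool) → ℝ)
    (hφj : ∀ d b, φ (Function.update d j b) = φ d)
    (hφk : ∀ d b, φ (Function.update d k b) = φ d) :
    ∑ d : F → Bool, dw q d * φ d = ∑ d : F → Bool, dw q' d * φ d := by
  rw [irrel_sum q (Function.update q j (q' j)) j
    (fun i hi => (Function.update_of_ne hi _ _).symm) φ hφj]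
  refine irrel_sum _ q' k ?_ φ hφk
  intro i hik
  rcases eq_or_ne i j with rfl | hij
  · rw [Function.update_self]
  · rw [Function.update_of_ne hij, hq i hij hik]

lemma perRho (q : F → ℝ) (h : ℕ → ℝ) (c : F → ℝ) :
    ∑ d : F → Bool, dw q d * ((∑ j : F, c j) * h (Wc d + 1) - (Wc d : ℝ) * h (Wc d))
      = ∑ j : F, (c j * q j *
            (∑ d : F → Bool, dw q d * (h (Wj j d + 2) - h (Wj j d + 1)))
          + (c j - q j) * ∑ d : F → Bool, dw q d * h (Wj j d + 1)) := by
  have e0 : ∑ d : F → Bool, dw q d * ((∑ j : F, c j) * h (Wc d + 1) - (Wc d : ℝ) * h (Wc d))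
      = (∑ j : F, c j) * (∑ d : F → Bool, dw q d * h (Wc d + 1))
        - ∑ d : F → Bool, dw q d * ((Wc d : ℝ) * h (Wc d)) := by
    rw [Finset.mul_sum, ← Finset.sum_sub_distrib]
    refine Finset.sum_congr rfl fun d _ => by ring
  rw [e0, stepA q h, Finset.sum_mul, ← Finset.sum_sub_distrib]
  refine Finset.sum_congr rfl fun j _ => ?_
  rw [stepB q h j]
  ring

lemma swap_half {G : Type} [Fintype G] [DecidableEq G] (j k : F) (f : (F ≃ G) → ℝ) :
    ∑ ρ : F ≃ G, f ρ
      = (1/2) * ∑ ρ : F ≃ G, (f ρ + f ((Equiv.swap j k).trans ρ)) := by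
  have he : Function.Involutive (fun ρ : F ≃ G => (Equiv.swap j k).trans ρ) := by
    intro ρ; ext i; simp [Equiv.swap_apply_self]
  have hcomp := Equiv.sum_comp he.toPerm f
  simp only [Function.Involutive.coe_toPerm] at hcomp
  rw [Finset.sum_add_distrib, hcomp]
  ring

lemma swap_step {G : Type} [Fintype G] [DecidableEq G] (p : F → G → ℝ) (h : ℕ → ℝ)
    (j k : F) (hjk : j ≠ k) :
    ∑ ρ : F ≃ G, (p j (ρ k) - p j (ρ j)) *
        ((∑ d : F → Bool, dw (fun i => p i (ρ i)) d * h (Wjk j k d + 1))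
          + p k (ρ k) * ∑ d : F → Bool,
              dw (fun i => p i (ρ i)) d * (h (Wjk j k d + 2) - h (Wjk j k d + 1)))
      = (1/2) * ∑ ρ : F ≃ G, ((p j (ρ j) - p j (ρ k)) * (p k (ρ j) - p k (ρ k)) *
          ∑ d : F → Bool, dw (fun i => p i (ρ i)) d *
            (h (Wjk j k d + 2) - h (Wjk j k d + 1))) := by
  rw [swap_half j k]
  congr 1
  refine Finset.sum_congr rfl fun ρ _ => ?_
  have h1 : ((Equiv.swap j k).trans ρ) j = ρ k := by simp
  have h2 : ((Equiv.swap j k).trans ρ) k = ρ j := by simp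
  have hq : ∀ i, i ≠ j → i ≠ k →
      (fun i => p i (((Equiv.swap j k).trans ρ) i)) i = (fun i => p i (ρ i)) i := by
    intro i hij hik
    simp only [Equiv.trans_apply, Equiv.swap_apply_of_ne_of_ne hij hik]
  have hB := irrel2 (fun i => p i (((Equiv.swap j k).trans ρ) i)) (fun i => p i (ρ i)) j k hq
      (fun d => h (Wjk j k d + 1))
      (fun d b => by simp only [Wjk_ignore_j]) (fun d b => by simp only [Wjk_ignore_k])
  have hD := irrel2 (fun i => p i (((Equiv.swap j k).trans ρ) i)) (fun i => p i (ρ i)) j k hq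
      (fun d => h (Wjk j k d + 2) - h (Wjk j k d + 1))
      (fun d b => by simp only [Wjk_ignore_j]) (fun d b => by simp only [Wjk_ignore_k])
  rw [h1, h2, hB, hD]
  ring

lemma gExp_diag {G : Type} [Fintype G] [DecidableEq G]
    (p : F → G → ℝ) (φ : (F → Bool) → (F ≃ G) → ℝ) :
    gExp F G p (fun x ρ => φ (fun i => x i (ρ i)) ρ)
      = (Fintype.card (F ≃ G) : ℝ)⁻¹ * ∑ ρ : F ≃ G,
          ∑ d : F → Bool, dw (fun i => p i (ρ i)) d * φ d ρ := by
  rw [gExp]; congr 1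
  refine Finset.sum_congr rfl fun ρ _ => ?_
  set E : ((F → Bool) × (∀ j : F, {r : G // r ≠ ρ j} → Bool)) ≃ (F → G → Bool) :=
  { toFun := fun dy j r => if hr : r = ρ j then dy.1 j else dy.2 j ⟨r, hr⟩
    invFun := fun x => (fun j => x j (ρ j), fun j s => x j s.1)
    left_inv := by
      rintro ⟨d, y⟩
      refine Prod.ext ?_ ?_
      · funext j; simp
      · funext j s; exact dif_neg s.2
    right_inv := by
      intro x; funext j r
      show (if hr : r = ρ j then x j (ρ j) else x j r) = x j r
      by_cases hr : r = ρ j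
      · rw [dif_pos hr, hr]
      · rw [dif_neg hr] } with hE
  rw [← Equiv.sum_comp E, Fintype.sum_prod_type]
  refine Finset.sum_congr rfl fun d _ => ?_
  have hdiag : ∀ y, (fun i => E (d, y) i (ρ i)) = d := by
    intro y; funext i
    show (if hr : ρ i = ρ i then d i else y i ⟨ρ i, hr⟩) = d i
    exact dif_pos rfl
  have hw : ∀ y, (∏ j : F, ∏ r : G, if E (d, y) j r then p j r else 1 - p j r)
      = dw (fun i => p i (ρ i)) d *
        ∏ j : F, ∏ s : {r : G // r ≠ ρ j}, (if y j s then p j s.1 else 1 - p j s.1) := by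
    intro y
    rw [dw, ← Finset.prod_mul_distrib]
    refine Finset.prod_congr rfl fun j _ => ?_
    rw [← Finset.mul_prod_erase univ _ (mem_univ (ρ j))]
    have h1 : E (d, y) j (ρ j) = d j := dif_pos rfl
    rw [Finset.prod_subtype (p := fun r => r ≠ ρ j) (univ.erase (ρ j))
      (fun r => by simp [Finset.mem_erase]) (fun r => if E (d, y) j r then p j r else 1 - p j r)]
    congr 1
    · rw [h1]
    · refine Finset.prod_congr rfl fun s _ => ?_
      have h2 : E (d, y) j s.1 = y j s := by
        show (if hr : s.1 = ρ j then d j else y j ⟨s.1, hr⟩) = y j s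
        rw [dif_neg s.2]
      rw [h2]
  have h2 : ∀ j : F, ∑ z : {r : G // r ≠ ρ j} → Bool,
      ∏ s : {r : G // r ≠ ρ j}, (if z s then p j s.1 else 1 - p j s.1) = 1 := by
    intro j
    have hps := Finset.prod_univ_sum (fun _ : {r : G // r ≠ ρ j} => (univ : Finset Bool))
      (fun s b => if b then p j s.1 else 1 - p j s.1)
    rw [Fintype.piFinset_univ] at hps
    rw [← hps]
    refine Finset.prod_eq_one fun s _ => by rw [Fintype.sum_bool]; norm_num
  have hone : ∑ y : ∀ j : F, {r : G // r ≠ ρ j} → Bool,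
      ∏ j : F, ∏ s : {r : G // r ≠ ρ j}, (if y j s then p j s.1 else 1 - p j s.1) = 1 := by
    have hps := Finset.prod_univ_sum (fun j : F => (univ : Finset ({r : G // r ≠ ρ j} → Bool)))
      (fun j z => ∏ s : {r : G // r ≠ ρ j}, (if z s then p j s.1 else 1 - p j s.1))
    rw [Fintype.piFinset_univ] at hps
    rw [← hps]
    exact Finset.prod_eq_one fun j _ => h2 j
  calc ∑ y : ∀ j : F, {r : G // r ≠ ρ j} → Bool,
        (∏ j : F, ∏ r : G, if E (d, y) j r then p j r else 1 - p j r) *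
          φ (fun i => E (d, y) i (ρ i)) ρ
      = ∑ y : ∀ j : F, {r : G // r ≠ ρ j} → Bool,
          dw (fun i => p i (ρ i)) d * φ d ρ *
            ∏ j : F, ∏ s : {r : G // r ≠ ρ j}, (if y j s then p j s.1 else 1 - p j s.1) := by
        refine Finset.sum_congr rfl fun y _ => ?_
        rw [hw y, hdiag y]; ring
    _ = dw (fun i => p i (ρ i)) d * φ d ρ := by
        rw [← Finset.mul_sum, hone, mul_one]

lemma pull1 (q : F → ℝ) (a : ℝ) (e : (F → Bool) → ℝ) :
    ∑ d : F → Bool, dw q d * (a * e d) = a * ∑ d : F → Bool, dw q d * e d := by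
  rw [Finset.mul_sum]
  exact Finset.sum_congr rfl fun d _ => by ring

lemma reshuffle {G : Type} [Fintype G] [DecidableEq G] (mr N : ℝ) (hmr : mr ≠ 0)
    (gg : (F ≃ G) → F → F → ℝ) :
    N * ∑ ρ : F ≃ G, ∑ j : F, (mr⁻¹ * ∑ k : F, (if j ≠ k then gg ρ j k else 0))
      = (1 / (2 * mr)) * ∑ j : F, ∑ k : F,
          (if j ≠ k then N * (2 * ∑ ρ : F ≃ G, gg ρ j k) else 0) := by
  have hmul : ∀ ρ : F ≃ G, ∀ j : F,
      N * (mr⁻¹ * ∑ k : F, (if j ≠ k then gg ρ j k else 0))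
        = ∑ k : F, (N * mr⁻¹ * (if j ≠ k then gg ρ j k else 0)) := by
    intro ρ j
    rw [Finset.mul_sum, Finset.mul_sum]
    exact Finset.sum_congr rfl fun k _ => by ring
  calc N * ∑ ρ : F ≃ G, ∑ j : F, (mr⁻¹ * ∑ k : F, (if j ≠ k then gg ρ j k else 0))
      = ∑ ρ : F ≃ G, ∑ j : F, (N * (mr⁻¹ * ∑ k : F, (if j ≠ k then gg ρ j k else 0))) := by
        rw [Finset.mul_sum]
        exact Finset.sum_congr rfl fun ρ _ => Finset.mul_sum ..
    _ = ∑ j : F, ∑ k : F, (N * mr⁻¹ * ∑ ρ : F ≃ G, (if j ≠ k then gg ρ j k else 0)) := by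
        rw [Finset.sum_comm]
        refine Finset.sum_congr rfl fun j _ => ?_
        rw [Finset.sum_congr rfl fun ρ (_ : ρ ∈ (univ : Finset (F ≃ G))) => hmul ρ j,
          Finset.sum_comm]
        exact Finset.sum_congr rfl fun k _ => (Finset.mul_sum ..).symm
    _ = (1 / (2 * mr)) * ∑ j : F, ∑ k : F,
          (if j ≠ k then N * (2 * ∑ ρ : F ≃ G, gg ρ j k) else 0) := by
        rw [Finset.mul_sum]
        refine Finset.sum_congr rfl fun j _ => ?_
        rw [Finset.mul_sum]
        refine Finset.sum_congr rfl fun k _ => ?_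
        by_cases hjk : j ≠ k
        · rw [Finset.sum_congr rfl fun ρ (_ : ρ ∈ (univ : Finset (F ≃ G))) => if_pos hjk,
            if_pos hjk]
          field_simp
        · rw [Finset.sum_congr rfl fun ρ (_ : ρ ∈ (univ : Finset (F ≃ G))) => if_neg hjk,
            if_neg hjk]
          simp

end aux

theorem stein_identity_diag (F G : Type) [Fintype F] [Fintype G]
    [DecidableEq F] [DecidableEq G]
    (m : ℕ) (hm : 2 ≤ m) (hF : Fintype.card F = m) (hG : Fintype.card G = m)
    (p : F → G → ℝ) (hp : ∀ j r, p j r ∈ Set.Icc (0:ℝ) 1)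
    (h : ℕ → ℝ) (hb : ∃ C : ℝ, ∀ k : ℕ, |h k| ≤ C)
    (mu : ℝ) (hmu : mu = ∑ j : F, (m:ℝ)⁻¹ * ∑ r : G, p j r) :
    gExp F G p (fun x ρ =>
        mu * h (gCount F G x ρ + 1) - (gCount F G x ρ : ℝ) * h (gCount F G x ρ))
    = (∑ j : F, gExp F G p (fun x ρ =>
          ((m:ℝ)⁻¹ * ∑ r : G, p j r) * p j (ρ j) *
            (h ((Finset.univ.filter fun i : F => i ≠ j ∧ x i (ρ i)).card + 2)
              - h ((Finset.univ.filter fun i : F => i ≠ j ∧ x i (ρ i)).card + 1))))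
      + (1 / (2 * (m:ℝ))) * ∑ j : F, ∑ k : F,
          (if j ≠ k then
            gExp F G p (fun x ρ =>
              (p j (ρ j) - p j (ρ k)) * (p k (ρ j) - p k (ρ k)) *
                (h ((Finset.univ.filter fun i : F => i ≠ j ∧ i ≠ k ∧ x i (ρ i)).card + 2)
                - h ((Finset.univ.filter fun i : F => i ≠ j ∧ i ≠ k ∧ x i (ρ i)).card + 1)))
           else 0) := by
  classical
  have hm0 : (m:ℝ) ≠ 0 := Nat.cast_ne_zero.mpr (by omega)
  set N : ℝ := (Fintype.card (F ≃ G) : ℝ)⁻¹ with hN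
  set c : F → ℝ := fun j => (m:ℝ)⁻¹ * ∑ r : G, p j r with hcdef
  -- diagonal reductions
  have eL : gExp F G p (fun x ρ =>
        mu * h (gCount F G x ρ + 1) - (gCount F G x ρ : ℝ) * h (gCount F G x ρ))
      = N * ∑ ρ : F ≃ G, ∑ d : F → Bool,
          dw (fun i => p i (ρ i)) d * (mu * h (Wc d + 1) - (Wc d : ℝ) * h (Wc d)) :=
    gExp_diag p (fun d ρ => mu * h (Wc d + 1) - (Wc d : ℝ) * h (Wc d))
  have e1 : ∀ j : F, gExp F G p (fun x ρ =>
        c j * p j (ρ j) *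
          (h ((Finset.univ.filter fun i : F => i ≠ j ∧ x i (ρ i)).card + 2)
            - h ((Finset.univ.filter fun i : F => i ≠ j ∧ x i (ρ i)).card + 1)))
      = N * ∑ ρ : F ≃ G, ∑ d : F → Bool,
          dw (fun i => p i (ρ i)) d * (c j * p j (ρ j) * (h (Wj j d + 2) - h (Wj j d + 1))) :=
    fun j => gExp_diag p (fun d ρ => c j * p j (ρ j) * (h (Wj j d + 2) - h (Wj j d + 1)))
  have e2 : ∀ j k : F, gExp F G p (fun x ρ =>
        (p j (ρ j) - p j (ρ k)) * (p k (ρ j) - p k (ρ k)) *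
          (h ((Finset.univ.filter fun i : F => i ≠ j ∧ i ≠ k ∧ x i (ρ i)).card + 2)
            - h ((Finset.univ.filter fun i : F => i ≠ j ∧ i ≠ k ∧ x i (ρ i)).card + 1)))
      = N * ∑ ρ : F ≃ G, ∑ d : F → Bool,
          dw (fun i => p i (ρ i)) d * ((p j (ρ j) - p j (ρ k)) * (p k (ρ j) - p k (ρ k)) *
            (h (Wjk j k d + 2) - h (Wjk j k d + 1))) :=
    fun j k => gExp_diag p (fun d ρ => (p j (ρ j) - p j (ρ k)) * (p k (ρ j) - p k (ρ k)) *
      (h (Wjk j k d + 2) - h (Wjk j k d + 1)))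
  rw [eL]
  rw [Finset.sum_congr rfl fun j (_ : j ∈ (univ : Finset F)) => e1 j]
  rw [Finset.sum_congr rfl fun j (_ : j ∈ (univ : Finset F)) =>
      Finset.sum_congr rfl fun k (_ : k ∈ (univ : Finset F)) => by rw [e2 j k]]
  -- pull scalars out of the d-sums on the RHS
  rw [Finset.sum_congr rfl fun j (_ : j ∈ (univ : Finset F)) => by
    rw [Finset.sum_congr rfl fun ρ (_ : ρ ∈ (univ : Finset (F ≃ G))) =>
      pull1 (fun i => p i (ρ i)) (c j * p j (ρ j)) (fun d => h (Wj j d + 2) - h (Wj j d + 1))]]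
  rw [Finset.sum_congr rfl fun j (_ : j ∈ (univ : Finset F)) =>
      Finset.sum_congr rfl fun k (_ : k ∈ (univ : Finset F)) => by
    rw [Finset.sum_congr rfl fun ρ (_ : ρ ∈ (univ : Finset (F ≃ G))) =>
      pull1 (fun i => p i (ρ i)) ((p j (ρ j) - p j (ρ k)) * (p k (ρ j) - p k (ρ k)))
        (fun d => h (Wjk j k d + 2) - h (Wjk j k d + 1))]]
  -- expand the LHS using the per-ρ Stein computation
  rw [hmu]
  rw [Finset.sum_congr rfl fun ρ (_ : ρ ∈ (univ : Finset (F ≃ G))) =>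
        perRho (fun i => p i (ρ i)) h c]
  -- rewrite the (c j - q j) terms
  have key2 : ∀ (ρ : F ≃ G) (j : F),
      (c j - p j (ρ j)) * ∑ d : F → Bool, dw (fun i => p i (ρ i)) d * h (Wj j d + 1)
        = (m:ℝ)⁻¹ * ∑ k : F, (if j ≠ k then (p j (ρ k) - p j (ρ j)) *
            ((∑ d : F → Bool, dw (fun i => p i (ρ i)) d * h (Wjk j k d + 1))
              + p k (ρ k) * ∑ d : F → Bool, dw (fun i => p i (ρ i)) d *
                  (h (Wjk j k d + 2) - h (Wjk j k d + 1))) else 0) := by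
    intro ρ j
    have hsc : ∑ k : F, p j (ρ k) = ∑ r : G, p j r := Equiv.sum_comp ρ (p j)
    have hcc : c j - p j (ρ j) = (m:ℝ)⁻¹ * ∑ k : F, (p j (ρ k) - p j (ρ j)) := by
      rw [Finset.sum_sub_distrib, hsc, Finset.sum_const, Finset.card_univ, hF,
        nsmul_eq_mul, hcdef]
      field_simp
    rw [hcc, mul_assoc, Finset.sum_mul]
    congr 1
    refine Finset.sum_congr rfl fun k _ => ?_
    rcases eq_or_ne j k with rfl | hjk
    · simp
    · rw [if_pos hjk, stepD (fun i => p i (ρ i)) h j k hjk.symm]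
  rw [Finset.sum_congr rfl fun ρ (_ : ρ ∈ (univ : Finset (F ≃ G))) =>
        Finset.sum_congr rfl fun j (_ : j ∈ (univ : Finset F)) => by rw [key2 ρ j]]
  -- use the swap symmetrization on the RHS
  have hsw : ∀ j k : F, j ≠ k →
      (∑ ρ : F ≃ G, (p j (ρ j) - p j (ρ k)) * (p k (ρ j) - p k (ρ k)) *
          ∑ d : F → Bool, dw (fun i => p i (ρ i)) d * (h (Wjk j k d + 2) - h (Wjk j k d + 1)))
        = 2 * ∑ ρ : F ≃ G, (p j (ρ k) - p j (ρ j)) *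
            ((∑ d : F → Bool, dw (fun i => p i (ρ i)) d * h (Wjk j k d + 1))
              + p k (ρ k) * ∑ d : F → Bool, dw (fun i => p i (ρ i)) d *
                  (h (Wjk j k d + 2) - h (Wjk j k d + 1))) := by
    intro j k hjk
    have := swap_step p h j k hjk
    linarith
  have hite : ∀ j k : F,
      (if j ≠ k then N * ∑ ρ : F ≃ G, (p j (ρ j) - p j (ρ k)) * (p k (ρ j) - p k (ρ k)) *
          ∑ d : F → Bool, dw (fun i => p i (ρ i)) d * (h (Wjk j k d + 2) - h (Wjk j k d + 1))
        else 0)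
      = (if j ≠ k then N * (2 * ∑ ρ : F ≃ G, (p j (ρ k) - p j (ρ j)) *
          ((∑ d : F → Bool, dw (fun i => p i (ρ i)) d * h (Wjk j k d + 1))
            + p k (ρ k) * ∑ d : F → Bool, dw (fun i => p i (ρ i)) d *
                (h (Wjk j k d + 2) - h (Wjk j k d + 1)))) else 0) := by
    intro j k
    rcases eq_or_ne j k with rfl | hjk
    · simp
    · rw [if_pos hjk, if_pos hjk, hsw j k hjk]
  rw [Finset.sum_congr rfl fun j (_ : j ∈ (univ : Finset F)) =>
      Finset.sum_congr rfl fun k (_ : k ∈ (univ : Finset F)) => hite j k]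
  -- now a pure reshuffle of finite sums
  rw [Finset.sum_congr rfl fun ρ (_ : ρ ∈ (univ : Finset (F ≃ G))) =>
        Finset.sum_add_distrib, Finset.sum_add_distrib, mul_add]
  congr 1
  · rw [Finset.sum_comm, Finset.mul_sum]
  · exact reshuffle (m:ℝ) N hm0 _
end
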